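/- arXiv:0901.4791 — 6 statements merged into one kernel-verified Lean document; each statement's English description precedes it below -/
import Mathlib

section
/- In the root system of type A_ℓ, for each 1 ≤ j ≤ ℓ, the Weyl group element (σ_1σ_2⋯σ_ℓ)^j sends α_i to α_{i+j mod (ℓ+1)} for all 0 ≤ i ≤ ℓ, where α_0 = −θ. -/
/-- The fundamental weight `λ_j` (1-indexed), written in the fundamental weight basis
of the weight lattice `Fin ℓ → ℤ`.  By convention `λ_j = 0` when `j = 0` or `j > ℓ`. -/
def lam (ℓ : ℕ) (j : ℕ) : Fin ℓ → ℤ :=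
  if h : 1 ≤ j ∧ j ≤ ℓ then Pi.single (⟨j - 1, by omega⟩ : Fin ℓ) 1 else 0

/-- The simple root `α_i` (1-indexed) determined by the Cartan matrix `C`
via `α_i = ∑_j C i j • λ_j`. -/
def rootOf (ℓ : ℕ) (C : ℕ → ℕ → ℤ) (i : ℕ) : Fin ℓ → ℤ :=
  fun k => C i (k.1 + 1)

/-- The simple reflection `σ_i = σ_{α_i}`.  Since the fundamental weights are dual to the
simple coroots, `⟨μ, α_i^∨⟩` is the `i`-th coordinate of `μ` in the fundamental weight
basis, and `σ_i μ = μ - ⟨μ, α_i^∨⟩ α_i`. -/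
def sref (ℓ : ℕ) (C : ℕ → ℕ → ℤ) (i : ℕ) (μ : Fin ℓ → ℤ) : Fin ℓ → ℤ :=
  if h : 1 ≤ i ∧ i ≤ ℓ then μ - μ ⟨i - 1, by omega⟩ • rootOf ℓ C i else μ

/-- The Weyl group element `σ_{i₁} σ_{i₂} ⋯ σ_{iₖ}` (applied to `μ`), for a word
`[i₁, i₂, …, iₖ]` in the simple reflections. -/
def word (ℓ : ℕ) (C : ℕ → ℕ → ℤ) (l : List ℕ) (μ : Fin ℓ → ℤ) : Fin ℓ → ℤ :=
  l.foldr (sref ℓ C) μ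

/-- The Cartan matrix of type `A_ℓ`. -/
def cartanA : ℕ → ℕ → ℤ := fun i j =>
  if i = j then 2 else if i + 1 = j ∨ j + 1 = i then -1 else 0

/-- The highest root of type `A_ℓ`: `θ = α_1 + ⋯ + α_ℓ`. -/
def thetaA (ℓ : ℕ) : Fin ℓ → ℤ := ∑ i ∈ Finset.Icc 1 ℓ, rootOf ℓ cartanA i

/-- `α_i` for `0 ≤ i ≤ ℓ`, with the convention `α_0 = -θ`. -/
def alphaIdxA (ℓ : ℕ) (i : ℕ) : Fin ℓ → ℤ :=
  if i = 0 then -thetaA ℓ else rootOf ℓ cartanA i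

/-!
Write a weight of `A_ℓ` in `ε`-coordinates, i.e. as a vector `v ∈ ℤ^{ℓ+1}` modulo constants,
whose pairing with `α_k^∨` is `v_{k-1} - v_k`. Then `α_p = ε_{p-1} - ε_p` for every
`p ∈ ℤ/(ℓ+1)`; for `p = 0` this is `-θ` because these `ℓ + 1` vectors sum to zero. The reflection
`σ_i` swaps the coordinates `i-1` and `i`, so `σ_1 ⋯ σ_ℓ` permutes the coordinates by the cycle
`(0 1 ⋯ ℓ)` and sends `ε_p` to `ε_{p+1}`, hence `α_p` to `α_{p+1}`.
-/

open Equiv Fin Fin.NatCast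

theorem Fin.cycleRange_succ_eq_mul_swap {n : ℕ} (i : Fin n) :
    cycleRange i.succ = cycleRange i.castSucc * swap i.castSucc i.succ := by
  ext j
  simp only [Perm.mul_apply, swap_apply_def]
  split_ifs with h₁ h₂
  · subst h₁
    rw [cycleRange_of_lt castSucc_lt_succ, cycleRange_of_gt castSucc_lt_succ, coeSucc_eq_succ]
  · subst h₂
    simp
  · rw [cycleRange_apply, cycleRange_apply]
    simp only [Fin.lt_def, Fin.ext_iff, val_succ, val_castSucc] at *
    split_ifs <;> omega

theorem sub_smul_single_sub_single_eq_comp_swap {ι R : Type*} [DecidableEq ι] [Ring R]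
    (v : ι → R) (a b : ι) :
    v - (v a - v b) • (Pi.single a 1 - Pi.single b 1) = v ∘ swap a b := by
  ext q
  rcases eq_or_ne q a with rfl | hqa
  · simp only [Pi.sub_apply, Pi.smul_apply, Pi.single_eq_same, Pi.single_apply, smul_eq_mul,
      Function.comp_apply, swap_apply_left]
    split_ifs <;> simp_all
  rcases eq_or_ne q b with rfl | hqb
  · simp [hqa]
  · simp [hqa, hqb, swap_apply_of_ne_of_ne]

theorem word_append_singleton (ℓ : ℕ) (C : ℕ → ℕ → ℤ) (l : List ℕ) (a : ℕ) (μ : Fin ℓ → ℤ) :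
    word ℓ C (l ++ [a]) μ = word ℓ C l (sref ℓ C a μ) :=
  List.foldr_append

def weightOfEps (ℓ : ℕ) : (Fin (ℓ + 1) → ℤ) →ₗ[ℤ] Fin ℓ → ℤ where
  toFun v k := v k.castSucc - v k.succ
  map_add' _ _ := by ext; simp only [Pi.add_apply]; ring
  map_smul' _ _ := by ext; simp only [Pi.smul_apply, smul_eq_mul, RingHom.id_apply]; ring

/-- `α_p` in `ε`-coordinates; `p - 1` wraps around in `Fin (ℓ + 1)`, so `epsRoot 0 = ε_ℓ - ε_0`. -/
def epsRoot {ℓ : ℕ} (p : Fin (ℓ + 1)) : Fin (ℓ + 1) → ℤ :=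
  Pi.single (p - 1) 1 - Pi.single p 1

section

variable {ℓ : ℕ}

theorem sum_epsRoot : ∑ p : Fin (ℓ + 1), epsRoot p = 0 := by
  simp only [epsRoot, Finset.sum_sub_distrib, sub_eq_zero]
  exact Equiv.sum_comp (Equiv.subRight 1) (fun q => Pi.single q (1 : ℤ))

theorem epsRoot_apply_sub (p a q : Fin (ℓ + 1)) : epsRoot p (q - a) = epsRoot (p + a) q := by
  simp only [epsRoot, Pi.sub_apply, Pi.single_apply, sub_eq_iff_eq_add, sub_add_eq_add_sub]

theorem rootOf_cartanA_succ (i : Fin ℓ) :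
    rootOf ℓ cartanA (i + 1) = weightOfEps ℓ (epsRoot i.succ) := by
  ext k
  simp only [rootOf, cartanA, weightOfEps, epsRoot, LinearMap.coe_mk, AddHom.coe_mk,
    Pi.sub_apply, Pi.single_apply, Fin.ext_iff, val_castSucc, val_succ,
    val_sub_one_of_ne_zero (succ_ne_zero i), add_tsub_cancel_right]
  split_ifs <;> omega

theorem thetaA_eq_neg_weightOfEps : thetaA ℓ = -weightOfEps ℓ (epsRoot 0) := by
  have hsum : ∑ i : Fin ℓ, epsRoot i.succ = -epsRoot 0 := by
    have h := sum_epsRoot (ℓ := ℓ)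
    rw [Fin.sum_univ_succ] at h
    exact eq_neg_of_add_eq_zero_right h
  rw [thetaA, ← Finset.Ico_add_one_right_eq_Icc, Finset.sum_Ico_eq_sum_range,
    add_tsub_cancel_right, ← Fin.sum_univ_eq_sum_range (fun i => rootOf ℓ cartanA (1 + i))]
  simp only [add_comm 1, rootOf_cartanA_succ, ← map_sum, hsum, map_neg]

theorem alphaIdxA_val_eq_weightOfEps (p : Fin (ℓ + 1)) :
    alphaIdxA ℓ p = weightOfEps ℓ (epsRoot p) := by
  cases p using Fin.cases with
  | zero => simp [alphaIdxA, thetaA_eq_neg_weightOfEps]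
  | succ i => simp [alphaIdxA, rootOf_cartanA_succ]

theorem sref_weightOfEps (i : Fin ℓ) (v : Fin (ℓ + 1) → ℤ) :
    sref ℓ cartanA (i + 1) (weightOfEps ℓ v) = weightOfEps ℓ (v ∘ swap i.castSucc i.succ) := by
  rw [sref, dif_pos (by omega), rootOf_cartanA_succ, ← map_smul, ← map_sub, epsRoot,
    ← coeSucc_eq_succ, add_sub_cancel_right, coeSucc_eq_succ]
  exact congrArg _ (sub_smul_single_sub_single_eq_comp_swap v _ _)

theorem word_range_weightOfEps (p : Fin (ℓ + 1)) (v : Fin (ℓ + 1) → ℤ) :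
    word ℓ cartanA ((List.range p).map (· + 1)) (weightOfEps ℓ v)
      = weightOfEps ℓ (v ∘ (cycleRange p).symm) := by
  induction p using Fin.induction generalizing v with
  | zero => simp only [val_zero, List.range_zero, List.map_nil, cycleRange_zero]; rfl
  | succ i ih =>
    rw [val_succ, List.range_succ, List.map_append, List.map_singleton, word_append_singleton,
      sref_weightOfEps, ← val_castSucc, ih, cycleRange_succ_eq_mul_swap]
    rfl

theorem word_coxeter_weightOfEps (v : Fin (ℓ + 1) → ℤ) :
    word ℓ cartanA ((List.range ℓ).map (· + 1)) (weightOfEps ℓ v)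
      = weightOfEps ℓ (fun q => v (q - 1)) := by
  simpa [Function.comp_def, finRotate_symm_apply] using word_range_weightOfEps (last ℓ) v

theorem iterate_word_coxeter_weightOfEps (n : ℕ) (v : Fin (ℓ + 1) → ℤ) :
    (word ℓ cartanA ((List.range ℓ).map (· + 1)))^[n] (weightOfEps ℓ v)
      = weightOfEps ℓ (fun q => v (q - (n : Fin (ℓ + 1)))) := by
  induction n with
  | zero => simp
  | succ n ih =>
    rw [Function.iterate_succ_apply', ih, word_coxeter_weightOfEps]
    simp only [Nat.cast_succ, sub_sub, add_comm (1 : Fin (ℓ + 1))]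

end

theorem typeA_product_power_on_simple_roots_general (ℓ : ℕ)
    (j : ℕ) (i : ℕ) (hi : i ≤ ℓ) :
    (word ℓ cartanA ((List.range ℓ).map (· + 1)))^[j] (alphaIdxA ℓ i)
      = alphaIdxA ℓ ((i + j) % (ℓ + 1)) := by
  obtain ⟨p, rfl⟩ : ∃ p : Fin (ℓ + 1), (p : ℕ) = i := ⟨⟨i, Nat.lt_succ_of_le hi⟩, rfl⟩
  rw [← Fin.val_natCast, alphaIdxA_val_eq_weightOfEps, alphaIdxA_val_eq_weightOfEps,
    iterate_word_coxeter_weightOfEps, Nat.cast_add, Fin.cast_val_eq_self]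
  simp only [epsRoot_apply_sub]

/-- In type `A_ℓ`, for `1 ≤ j ≤ ℓ`, the element `(σ_1 σ_2 ⋯ σ_ℓ)^j` sends
`α_i` to `α_{(i+j) mod (ℓ+1)}` for all `0 ≤ i ≤ ℓ`, where `α_0 = -θ`. -/
theorem typeA_product_power_on_simple_roots (ℓ : ℕ) (hℓ : 1 ≤ ℓ)
    (j : ℕ) (hj1 : 1 ≤ j) (hj2 : j ≤ ℓ) (i : ℕ) (hi : i ≤ ℓ) :
    (word ℓ cartanA ((List.range ℓ).map (· + 1)))^[j] (alphaIdxA ℓ i)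
      = alphaIdxA ℓ ((i + j) % (ℓ + 1)) :=
  typeA_product_power_on_simple_roots_general ℓ j i hi
end

section
/- In the root system of type C_ℓ, the Weyl group element σ = (σ_ℓσ_{ℓ−1}⋯σ_1)(σ_ℓσ_{ℓ−1}⋯σ_2)⋯(σ_ℓσ_{ℓ−1})(σ_ℓ) satisfies σ(λ_j) = λ_{ℓ−j} − λ_ℓ for all 1 ≤ j ≤ ℓ, with the convention λ_0 = 0. -/
/-- The Cartan matrix of type `C_ℓ` (with `α_ℓ` long):
`α_i = -λ_{i-1} + 2λ_i - λ_{i+1}` for `i < ℓ` and `α_ℓ = -2λ_{ℓ-1} + 2λ_ℓ`. -/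
def cartanC (ℓ : ℕ) : ℕ → ℕ → ℤ := fun i j =>
  if i = j then 2
  else if i + 1 = j then -1
  else if j + 1 = i then (if i = ℓ then -2 else -1)
  else 0

/-- The word `(σ_ℓ σ_{ℓ-1} ⋯ σ_1)(σ_ℓ σ_{ℓ-1} ⋯ σ_2) ⋯ (σ_ℓ σ_{ℓ-1})(σ_ℓ)`. -/
def wordC (ℓ : ℕ) : List ℕ :=
  (List.range ℓ).flatMap (fun k => (List.range (ℓ - k)).map (fun t => ℓ - t))

/-! ### auxiliary development -/

/-- standard coordinates: partial sums of fundamental-weight coordinates -/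
def T' (ℓ : ℕ) (μ : Fin ℓ → ℤ) (m : ℕ) : ℤ := ∑ i : Fin ℓ, if m ≤ i.1 then μ i else 0

lemma T'_high (ℓ : ℕ) (μ : Fin ℓ → ℤ) (m : ℕ) (h : ℓ ≤ m) : T' ℓ μ m = 0 := by
  apply Finset.sum_eq_zero
  intro i _
  rw [if_neg (by omega)]

lemma T'_shift (ℓ : ℕ) (μ : Fin ℓ → ℤ) (m : ℕ) :
    T' ℓ μ m = (if h : m < ℓ then μ ⟨m, h⟩ else 0) + T' ℓ μ (m + 1) := by
  by_cases h : m < ℓ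
  · rw [dif_pos h]
    unfold T'
    have : μ ⟨m, h⟩ = ∑ i : Fin ℓ, if i = ⟨m, h⟩ then μ i else 0 := by
      rw [Finset.sum_ite_eq' Finset.univ (⟨m, h⟩ : Fin ℓ) μ, if_pos (Finset.mem_univ _)]
    rw [this, ← Finset.sum_add_distrib]
    apply Finset.sum_congr rfl
    intro i _
    rcases eq_or_ne i (⟨m, h⟩ : Fin ℓ) with rfl | hne
    · simp
    · rw [if_neg hne]
      have : i.1 ≠ m := fun hh => hne (Fin.ext hh)
      split_ifs <;> omega
  · rw [dif_neg h, T'_high ℓ μ m (by omega), T'_high ℓ μ (m+1) (by omega)]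
    ring

lemma T'_inj (ℓ : ℕ) (μ ν : Fin ℓ → ℤ) (h : ∀ m, T' ℓ μ m = T' ℓ ν m) : μ = ν := by
  funext k
  have h1 := T'_shift ℓ μ k.1
  have h2 := T'_shift ℓ ν k.1
  rw [dif_pos k.2] at h1 h2
  have : (⟨k.1, k.2⟩ : Fin ℓ) = k := rfl
  rw [this] at h1 h2
  have := h k.1
  have := h (k.1 + 1)
  omega

lemma T'_sub_smul (ℓ : ℕ) (μ ν : Fin ℓ → ℤ) (c : ℤ) (m : ℕ) :
    T' ℓ (μ - c • ν) m = T' ℓ μ m - c * T' ℓ ν m := by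
  unfold T'
  rw [Finset.mul_sum, ← Finset.sum_sub_distrib]
  apply Finset.sum_congr rfl
  intro i _
  simp only [Pi.sub_apply, Pi.smul_apply, smul_eq_mul]
  split_ifs <;> ring

lemma T'_sub (ℓ : ℕ) (μ ν : Fin ℓ → ℤ) (m : ℕ) :
    T' ℓ (μ - ν) m = T' ℓ μ m - T' ℓ ν m := by
  have := T'_sub_smul ℓ μ ν 1 m
  rw [one_smul] at this
  rw [this]; ring

lemma downInd (ℓ : ℕ) (P : ℕ → Prop) (h0 : ∀ m, ℓ ≤ m → P m)
    (hs : ∀ m, m < ℓ → P (m + 1) → P m) : ∀ m, P m := by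
  have key : ∀ d m, ℓ - m ≤ d → P m := by
    intro d
    induction d with
    | zero => intro m hm; exact h0 m (by omega)
    | succ d ih =>
      intro m hm
      by_cases h : ℓ ≤ m
      · exact h0 m h
      · exact hs m (by omega) (ih (m+1) (by omega))
  intro m; exact key (ℓ - m) m le_rfl

/-- closed form for `T'` of a simple root -/
def Rt (ℓ i m : ℕ) : ℤ :=
  if i = ℓ then (if m = ℓ - 1 then 2 else 0)
  else (if m + 1 = i then 1 else 0) - (if m = i then 1 else 0)

lemma T'_root (ℓ i : ℕ) (h1 : 1 ≤ i) (h2 : i ≤ ℓ) :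
    ∀ m, T' ℓ (rootOf ℓ (cartanC ℓ) i) m = Rt ℓ i m := by
  apply downInd ℓ
  · intro m hm
    rw [T'_high ℓ _ m hm]
    unfold Rt
    split_ifs <;> omega
  · intro m hm ih
    rw [T'_shift, dif_pos hm, ih]
    show cartanC ℓ i (m + 1) + Rt ℓ i (m + 1) = Rt ℓ i m
    unfold cartanC Rt
    split_ifs <;> omega

/-- action of `σ_i` on standard coordinates -/
def swapAct (ℓ i : ℕ) (s : ℕ → ℤ) (m : ℕ) : ℤ :=
  if i = ℓ then (if m = ℓ - 1 then -s m else s m)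
  else if m + 1 = i then s i else if m = i then s (i - 1) else s m

lemma sref_T' (ℓ i : ℕ) (h1 : 1 ≤ i) (h2 : i ≤ ℓ) (μ : Fin ℓ → ℤ) (m : ℕ) :
    T' ℓ (sref ℓ (cartanC ℓ) i μ) m = swapAct ℓ i (T' ℓ μ) m := by
  have hco : μ ⟨i - 1, by omega⟩ = T' ℓ μ (i - 1) - T' ℓ μ i := by
    have h := T'_shift ℓ μ (i - 1)
    rw [dif_pos (by omega : i - 1 < ℓ)] at h
    have h' : i - 1 + 1 = i := by omega
    rw [h'] at h
    omega
  rw [sref, dif_pos ⟨h1, h2⟩, T'_sub_smul, hco, T'_root ℓ i h1 h2 m]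
  unfold swapAct Rt
  rcases eq_or_ne i ℓ with h | hne
  · subst h
    rw [if_pos rfl, if_pos rfl, T'_high i μ i le_rfl]
    split_ifs with h
    · rw [h]; ring
    · ring
  · rw [if_neg hne, if_neg hne]
    by_cases hA : m + 1 = i
    · rw [if_pos hA, if_pos hA, if_neg (by omega : ¬ m = i)]
      have : m = i - 1 := by omega
      rw [this]; ring
    · rw [if_neg hA, if_neg hA]
      by_cases hB : m = i
      · rw [if_pos hB, if_pos hB, hB]; ring
      · rw [if_neg hB, if_neg hB]; ring

/-- one block of the word: `[ℓ, ℓ-1, …, ℓ-n+1]` -/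
def Blk (ℓ n : ℕ) : List ℕ := (List.range n).map (fun t => ℓ - t)

/-- action of the block `σ_ℓ ⋯ σ_{p+1}` on standard coordinates -/
def cycAct (ℓ p : ℕ) (s : ℕ → ℤ) (m : ℕ) : ℤ :=
  if m < p then s m else if m = ℓ - 1 then -s p else s (m + 1)

lemma cycAct_congr (ℓ p : ℕ) (s t : ℕ → ℤ) (h : ∀ x, s x = t x) (m : ℕ) :
    cycAct ℓ p s m = cycAct ℓ p t m := by
  unfold cycAct
  split_ifs <;> simp [h]

lemma cyc_swap (ℓ i : ℕ) (h1 : 1 ≤ i) (h2 : i ≤ ℓ) (s : ℕ → ℤ) (m : ℕ) :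
    cycAct ℓ i (swapAct ℓ i s) m = cycAct ℓ (i - 1) s m := by
  unfold cycAct swapAct
  split_ifs <;>
    first
      | rfl
      | (exfalso; omega)
      | (apply congrArg; omega)
      | (apply congrArg; apply congrArg; omega)

lemma blk_T' (ℓ : ℕ) : ∀ n, n ≤ ℓ → ∀ (μ : Fin ℓ → ℤ) (m : ℕ),
    T' ℓ (word ℓ (cartanC ℓ) (Blk ℓ n) μ) m = cycAct ℓ (ℓ - n) (T' ℓ μ) m := by
  intro n
  induction n with
  | zero =>
    intro _ μ m
    show T' ℓ μ m = cycAct ℓ (ℓ - 0) (T' ℓ μ) m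
    unfold cycAct
    split_ifs with hA hB
    · rfl
    · rw [T'_high ℓ μ m (by omega), T'_high ℓ μ (ℓ - 0) (by omega)]; ring
    · rw [T'_high ℓ μ m (by omega), T'_high ℓ μ (m+1) (by omega)]
  | succ n ih =>
    intro hn μ m
    have hb : Blk ℓ (n + 1) = Blk ℓ n ++ [ℓ - n] := by
      unfold Blk
      rw [List.range_succ, List.map_append]
      rfl
    have hw : word ℓ (cartanC ℓ) (Blk ℓ (n + 1)) μ
        = word ℓ (cartanC ℓ) (Blk ℓ n) (sref ℓ (cartanC ℓ) (ℓ - n) μ) := by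
      rw [hb]
      unfold word
      rw [List.foldr_append]
      rfl
    rw [hw, ih (by omega)]
    have e1 := cycAct_congr ℓ (ℓ - n) _ _
      (sref_T' ℓ (ℓ - n) (by omega) (by omega) μ) m
    rw [e1]
    have e2 := cyc_swap ℓ (ℓ - n) (by omega) (by omega) (T' ℓ μ) m
    rw [e2, show ℓ - n - 1 = ℓ - (n + 1) from by omega]

/-- the suffix of the word consisting of blocks `k = q, q+1, …, ℓ-1` -/
def tailW (ℓ q : ℕ) : List ℕ :=
  ((List.range (ℓ - q)).map (fun t => q + t)).flatMap (fun k => Blk ℓ (ℓ - k))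

lemma tailW_cons (ℓ q : ℕ) (h : q < ℓ) :
    tailW ℓ q = Blk ℓ (ℓ - q) ++ tailW ℓ (q + 1) := by
  unfold tailW
  rw [show ℓ - q = (ℓ - (q + 1)) + 1 from by omega, List.range_succ_eq_map,
    List.map_cons, List.flatMap_cons, List.map_map]
  congr 2
  · omega
  · apply List.map_congr_left
    intro t _
    show q + Nat.succ t = q + 1 + t
    omega

/-- action of `C_q ∘ C_{q+1} ∘ ⋯ ∘ C_{ℓ-1}` on standard coordinates -/
def DAct (ℓ p : ℕ) (s : ℕ → ℤ) (m : ℕ) : ℤ :=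
  if m < p then s m else if m < ℓ then -s (ℓ - 1 + p - m) else 0

lemma cyc_D (ℓ q : ℕ) (h : q < ℓ) (s : ℕ → ℤ) (m : ℕ) :
    cycAct ℓ q (DAct ℓ (q + 1) s) m = DAct ℓ q s m := by
  unfold cycAct DAct
  split_ifs <;>
    first
      | rfl
      | (exfalso; omega)
      | (apply congrArg; omega)
      | (apply congrArg; apply congrArg; omega)

lemma tail_T'_top (ℓ : ℕ) (μ : Fin ℓ → ℤ) (m : ℕ) :
    T' ℓ (word ℓ (cartanC ℓ) (tailW ℓ ℓ) μ) m = DAct ℓ ℓ (T' ℓ μ) m := by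
  have h : tailW ℓ ℓ = [] := by
    unfold tailW
    rw [show ℓ - ℓ = 0 from by omega]
    rfl
  rw [h]
  show T' ℓ μ m = DAct ℓ ℓ (T' ℓ μ) m
  unfold DAct
  split_ifs with hA
  · rfl
  · rw [T'_high ℓ μ m (by omega)]

lemma tail_T' (ℓ : ℕ) : ∀ d q, ℓ - q ≤ d → q ≤ ℓ → ∀ (μ : Fin ℓ → ℤ) (m : ℕ),
    T' ℓ (word ℓ (cartanC ℓ) (tailW ℓ q) μ) m = DAct ℓ q (T' ℓ μ) m := by
  intro d
  induction d with
  | zero =>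
    intro q h1 h2 μ m
    have hq : q = ℓ := by omega
    rw [hq]
    exact tail_T'_top ℓ μ m
  | succ d ih =>
    intro q h1 h2 μ m
    by_cases hq : q = ℓ
    · rw [hq]
      exact tail_T'_top ℓ μ m
    · have hlt : q < ℓ := by omega
      rw [tailW_cons ℓ q hlt]
      have hw : word ℓ (cartanC ℓ) (Blk ℓ (ℓ - q) ++ tailW ℓ (q + 1)) μ
          = word ℓ (cartanC ℓ) (Blk ℓ (ℓ - q)) (word ℓ (cartanC ℓ) (tailW ℓ (q + 1)) μ) := by
        unfold word
        rw [List.foldr_append]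
      rw [hw, blk_T' ℓ (ℓ - q) (by omega), show ℓ - (ℓ - q) = q from by omega]
      have e1 := cycAct_congr ℓ q _ _ (ih (q + 1) (by omega) (by omega) μ) m
      rw [e1, cyc_D ℓ q hlt]

lemma wordC_eq (ℓ : ℕ) : wordC ℓ = tailW ℓ 0 := by
  simp [tailW, wordC, Blk]

lemma T'_lam (ℓ j : ℕ) : ∀ m, T' ℓ (lam ℓ j) m = if 1 ≤ j ∧ j ≤ ℓ ∧ m < j then 1 else 0 := by
  by_cases hj : 1 ≤ j ∧ j ≤ ℓ
  · apply downInd ℓ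
    · intro m hm
      rw [T'_high ℓ _ m hm]
      rw [if_neg (by omega)]
    · intro m hm ih
      rw [T'_shift, dif_pos hm, ih]
      have hv : lam ℓ j ⟨m, hm⟩ = if m = j - 1 then 1 else 0 := by
        unfold lam
        rw [dif_pos hj, Pi.single_apply]
        simp only [Fin.mk.injEq]
      rw [hv]
      split_ifs <;> omega
  · intro m
    have h0 : lam ℓ j = 0 := by unfold lam; rw [dif_neg hj]
    rw [h0, if_neg (fun hc => hj ⟨hc.1, hc.2.1⟩)]
    unfold T'
    apply Finset.sum_eq_zero
    intro i _
    split_ifs <;> rfl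

/-- In type `C_ℓ`, `σ = (σ_ℓ ⋯ σ_1)(σ_ℓ ⋯ σ_2) ⋯ (σ_ℓ)` satisfies
`σ(λ_j) = λ_{ℓ-j} - λ_ℓ` for all `1 ≤ j ≤ ℓ` (with `λ_0 = 0`). -/
theorem typeC_element_on_fundamental_weights (ℓ : ℕ) (hℓ : 2 ≤ ℓ)
    (j : ℕ) (hj1 : 1 ≤ j) (hj2 : j ≤ ℓ) :
    word ℓ (cartanC ℓ) (wordC ℓ) (lam ℓ j) = lam ℓ (ℓ - j) - lam ℓ ℓ := by
  apply T'_inj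
  intro m
  rw [wordC_eq, tail_T' ℓ ℓ 0 (by omega) (by omega) (lam ℓ j) m, T'_sub,
    T'_lam ℓ (ℓ - j) m, T'_lam ℓ ℓ m]
  unfold DAct
  rw [T'_lam ℓ j (ℓ - 1 + 0 - m)]
  split_ifs <;> omega
end

section
/- In the root system of type C_ℓ with highest root θ = 2α_1 + 2α_2 + ⋯ + 2α_{ℓ−1} + α_ℓ, the Weyl group element σ = (σ_ℓσ_{ℓ−1}⋯σ_1)(σ_ℓσ_{ℓ−1}⋯σ_2)⋯(σ_ℓ) satisfies σ(−θ) = α_ℓ, σ(α_j) = α_{ℓ−j} for 1 ≤ j < ℓ, and σ(α_ℓ) = −θ. -/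
/-- The highest root of type `C_ℓ`: `θ = 2α_1 + ⋯ + 2α_{ℓ-1} + α_ℓ`. -/
def thetaC (ℓ : ℕ) : Fin ℓ → ℤ :=
  (∑ i ∈ Finset.Icc 1 (ℓ - 1), 2 • rootOf ℓ (cartanC ℓ) i) + rootOf ℓ (cartanC ℓ) ℓ

def ext (ℓ : ℕ) (μ : Fin ℓ → ℤ) (k : ℕ) : ℤ := if h : k < ℓ then μ ⟨k, h⟩ else 0

def csum (ℓ : ℕ) (μ : Fin ℓ → ℤ) (j : ℕ) : ℤ := ∑ k ∈ Finset.Ico j ℓ, ext ℓ μ k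

lemma csum_of_le (ℓ : ℕ) {j : ℕ} (h : ℓ ≤ j) (μ : Fin ℓ → ℤ) : csum ℓ μ j = 0 := by
  unfold csum
  rw [Finset.Ico_eq_empty (by omega)]
  simp

lemma csum_succ (ℓ : ℕ) {j : ℕ} (h : j < ℓ) (μ : Fin ℓ → ℤ) :
    csum ℓ μ j = μ ⟨j, h⟩ + csum ℓ μ (j + 1) := by
  unfold csum
  rw [Finset.sum_eq_sum_Ico_succ_bot h]
  unfold ext
  rw [dif_pos h]

lemma apply_eq (ℓ : ℕ) (μ : Fin ℓ → ℤ) (k : Fin ℓ) :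
    μ k = csum ℓ μ k.1 - csum ℓ μ (k.1 + 1) := by
  rw [csum_succ ℓ k.isLt]
  simp

lemma eq_of_csum (ℓ : ℕ) {μ ν : Fin ℓ → ℤ} (h : ∀ j, csum ℓ μ j = csum ℓ ν j) : μ = ν := by
  funext k
  rw [apply_eq ℓ μ k, apply_eq ℓ ν k, h, h]

lemma csum_sub_smul (ℓ : ℕ) (μ ρ : Fin ℓ → ℤ) (m : ℤ) (j : ℕ) :
    csum ℓ (μ - m • ρ) j = csum ℓ μ j - m * csum ℓ ρ j := by
  unfold csum
  rw [Finset.mul_sum, ← Finset.sum_sub_distrib]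
  refine Finset.sum_congr rfl fun k _ => ?_
  unfold ext
  split <;> simp

lemma csum_neg (ℓ : ℕ) (μ : Fin ℓ → ℤ) (j : ℕ) : csum ℓ (-μ) j = -csum ℓ μ j := by
  unfold csum
  rw [← Finset.sum_neg_distrib]
  refine Finset.sum_congr rfl fun k _ => ?_
  unfold ext
  split <;> simp

lemma csum_add (ℓ : ℕ) (μ ν : Fin ℓ → ℤ) (j : ℕ) :
    csum ℓ (μ + ν) j = csum ℓ μ j + csum ℓ ν j := by
  unfold csum
  rw [← Finset.sum_add_distrib]
  refine Finset.sum_congr rfl fun k _ => ?_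
  unfold ext
  split <;> simp

lemma csum_two_smul (ℓ : ℕ) (ρ : Fin ℓ → ℤ) (j : ℕ) :
    csum ℓ (2 • ρ) j = 2 * csum ℓ ρ j := by
  unfold csum
  rw [Finset.mul_sum]
  refine Finset.sum_congr rfl fun k _ => ?_
  unfold ext
  split <;> simp [two_mul, two_smul]

lemma csum_finset_sum (ℓ : ℕ) (s : Finset ℕ) (f : ℕ → Fin ℓ → ℤ) (j : ℕ) :
    csum ℓ (∑ i ∈ s, f i) j = ∑ i ∈ s, csum ℓ (f i) j := by
  unfold csum
  rw [Finset.sum_comm]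
  refine Finset.sum_congr rfl fun k _ => ?_
  unfold ext
  split <;> simp

lemma csum_root (ℓ : ℕ) {i : ℕ} (h1 : 1 ≤ i) (h2 : i ≤ ℓ) :
    ∀ (n j : ℕ), ℓ ≤ j + n →
      csum ℓ (rootOf ℓ (cartanC ℓ) i) j =
        if i = ℓ then (if j = ℓ - 1 then 2 else 0)
        else if j + 1 = i then 1 else if j = i then -1 else 0 := by
  intro n
  induction n with
  | zero =>
    intro j hj
    rw [csum_of_le ℓ (by omega)]
    split_ifs <;> omega
  | succ n ih =>
    intro j hj
    by_cases hjl : j < ℓ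
    · rw [csum_succ ℓ hjl, ih (j + 1) (by omega)]
      show cartanC ℓ i (j + 1) + _ = _
      unfold cartanC
      split_ifs <;> omega
    · rw [csum_of_le ℓ (by omega)]
      split_ifs <;> omega

lemma sref_csum_short (ℓ : ℕ) {i : ℕ} (h1 : 1 ≤ i) (h2 : i < ℓ) (μ : Fin ℓ → ℤ) (j : ℕ) :
    csum ℓ (sref ℓ (cartanC ℓ) i μ) j =
      if j + 1 = i then csum ℓ μ i
      else if j = i then csum ℓ μ (i - 1)
      else csum ℓ μ j := by
  unfold sref
  rw [dif_pos ⟨h1, by omega⟩, csum_sub_smul, csum_root ℓ h1 (le_of_lt h2) ℓ j (by omega)]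
  have e : i - 1 + 1 = i := by omega
  have hμ : μ ⟨i - 1, by omega⟩ = csum ℓ μ (i - 1) - csum ℓ μ i := by
    rw [apply_eq ℓ μ ⟨i - 1, by omega⟩]
    simp only [Fin.val_mk, e]
  rw [hμ, if_neg (by omega : ¬ i = ℓ)]
  split_ifs with a b
  · rw [show i - 1 = j by omega]; ring
  · rw [b]; ring
  · ring

lemma sref_csum_long (ℓ : ℕ) (hℓ : 1 ≤ ℓ) (μ : Fin ℓ → ℤ) (j : ℕ) :
    csum ℓ (sref ℓ (cartanC ℓ) ℓ μ) j =
      if j = ℓ - 1 then -(csum ℓ μ (ℓ - 1)) else csum ℓ μ j := by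
  unfold sref
  rw [dif_pos ⟨hℓ, le_refl ℓ⟩, csum_sub_smul, csum_root ℓ hℓ le_rfl ℓ j (by omega),
    if_pos rfl]
  have hμ : μ ⟨ℓ - 1, by omega⟩ = csum ℓ μ (ℓ - 1) - csum ℓ μ ℓ := by
    rw [apply_eq ℓ μ ⟨ℓ - 1, by omega⟩]
    simp only [Fin.val_mk, show ℓ - 1 + 1 = ℓ by omega]
  rw [hμ, csum_of_le ℓ le_rfl]
  split_ifs with a
  · subst a; ring
  · ring

def Lrun (m k : ℕ) : List ℕ := (List.range (m - k)).map (fun t => m - t)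

lemma Lrun_cons {m k : ℕ} (h : k < m) : Lrun m k = m :: Lrun (m - 1) k := by
  unfold Lrun
  rw [show m - k = (m - 1 - k) + 1 by omega, List.range_succ_eq_map, List.map_cons,
    List.map_map]
  congr 1
  refine List.map_congr_left fun t _ => ?_
  show m - (t + 1) = m - 1 - t
  omega

lemma word_cons (ℓ : ℕ) (C : ℕ → ℕ → ℤ) (a : ℕ) (l : List ℕ) (μ : Fin ℓ → ℤ) :
    word ℓ C (a :: l) μ = sref ℓ C a (word ℓ C l μ) := rfl

lemma word_append (ℓ : ℕ) (C : ℕ → ℕ → ℤ) (l l' : List ℕ) (μ : Fin ℓ → ℤ) :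
    word ℓ C (l ++ l') μ = word ℓ C l (word ℓ C l' μ) := by
  unfold word
  rw [List.foldr_append]

lemma word_Lrun (ℓ k : ℕ) :
    ∀ m, m < ℓ → k ≤ m → ∀ (μ : Fin ℓ → ℤ) (j : ℕ),
      csum ℓ (word ℓ (cartanC ℓ) (Lrun m k) μ) j =
        if k ≤ j ∧ j < m then csum ℓ μ (j + 1)
        else if j = m ∧ k < m then csum ℓ μ k
        else csum ℓ μ j := by
  intro m
  induction m with
  | zero =>
    intro _ hk μ j
    have : Lrun 0 k = [] := by unfold Lrun; simp
    rw [this]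
    show csum ℓ μ j = _
    split_ifs <;> first | rfl | omega | (congr 1; omega)
  | succ m ih =>
    intro hm hk μ j
    by_cases hkm : k = m + 1
    · have : Lrun (m + 1) k = [] := by unfold Lrun; rw [show m + 1 - k = 0 by omega]; simp
      rw [this]
      show csum ℓ μ j = _
      split_ifs <;> first | rfl | omega | (congr 1; omega)
    · rw [Lrun_cons (show k < m + 1 by omega), word_cons,
        sref_csum_short ℓ (by omega) hm, show m + 1 - 1 = m by rfl,
        ih (by omega) (by omega), ih (by omega) (by omega), ih (by omega) (by omega)]
      split_ifs <;> first | rfl | omega | (congr 1; omega)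

lemma word_block (ℓ : ℕ) {k : ℕ} (hk : k < ℓ) (μ : Fin ℓ → ℤ) (j : ℕ) :
    csum ℓ (word ℓ (cartanC ℓ) (Lrun ℓ k) μ) j =
      if k ≤ j ∧ j < ℓ - 1 then csum ℓ μ (j + 1)
      else if j = ℓ - 1 then -(csum ℓ μ k)
      else csum ℓ μ j := by
  rw [Lrun_cons hk, word_cons, sref_csum_long ℓ (by omega),
    word_Lrun ℓ k (ℓ - 1) (by omega) (by omega), word_Lrun ℓ k (ℓ - 1) (by omega) (by omega)]
  split_ifs <;>
    first | rfl | omega | (congr 1; omega) | (congr 2; omega) | (rw [neg_eq_iff_eq_neg]; congr 1; omega)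

def Wlist (ℓ k : ℕ) : List ℕ := (List.range (ℓ - k)).flatMap (fun t => Lrun ℓ (t + k))

lemma Wlist_cons (ℓ : ℕ) {k : ℕ} (h : k < ℓ) : Wlist ℓ k = Lrun ℓ k ++ Wlist ℓ (k + 1) := by
  unfold Wlist
  rw [show ℓ - k = (ℓ - (k + 1)) + 1 by omega, List.range_succ_eq_map, List.flatMap_cons,
    List.flatMap_map]
  congr 1
  · rw [Nat.zero_add]
  · refine List.flatMap_congr fun t _ => ?_
    show Lrun ℓ (t + 1 + k) = Lrun ℓ (t + (k + 1))
    rw [show t + 1 + k = t + (k + 1) by omega]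

lemma word_Wlist (ℓ : ℕ) : ∀ n k, k + n = ℓ → ∀ (μ : Fin ℓ → ℤ) (j : ℕ),
    csum ℓ (word ℓ (cartanC ℓ) (Wlist ℓ k) μ) j =
      if k ≤ j ∧ j < ℓ then -(csum ℓ μ (ℓ - 1 + k - j)) else csum ℓ μ j := by
  intro n
  induction n with
  | zero =>
    intro k hk μ j
    have : Wlist ℓ k = [] := by unfold Wlist; rw [show ℓ - k = 0 by omega]; simp
    rw [this]
    show csum ℓ μ j = _
    rw [if_neg (by omega)]
  | succ n ih =>
    intro k hk μ j
    rw [Wlist_cons ℓ (show k < ℓ by omega), word_append, word_block ℓ (show k < ℓ by omega),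
      ih (k + 1) (by omega), ih (k + 1) (by omega), ih (k + 1) (by omega)]
    split_ifs <;>
      first | rfl | omega | (congr 1; omega) | (congr 2; omega)

lemma csum_theta (ℓ : ℕ) (hℓ : 2 ≤ ℓ) (j : ℕ) :
    csum ℓ (thetaC ℓ) j = if j = 0 then 2 else 0 := by
  unfold thetaC
  rw [csum_add, csum_finset_sum, csum_root ℓ (by omega) le_rfl ℓ j (by omega), if_pos rfl]
  have hs : ∀ i ∈ Finset.Icc 1 (ℓ - 1), csum ℓ (2 • rootOf ℓ (cartanC ℓ) i) j
      = (if i = j + 1 then (2 : ℤ) else 0) + (if i = j then -2 else 0) := by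
    intro i hi
    rw [Finset.mem_Icc] at hi
    rw [csum_two_smul, csum_root ℓ hi.1 (by omega) ℓ j (by omega), if_neg (by omega)]
    split_ifs <;> omega
  rw [Finset.sum_congr rfl hs, Finset.sum_add_distrib, Finset.sum_ite_eq', Finset.sum_ite_eq']
  simp only [Finset.mem_Icc]
  split_ifs <;> omega

lemma csum_root' (ℓ : ℕ) {i : ℕ} (h1 : 1 ≤ i) (h2 : i ≤ ℓ) (j : ℕ) :
    csum ℓ (rootOf ℓ (cartanC ℓ) i) j =
      if i = ℓ then (if j = ℓ - 1 then 2 else 0)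
      else if j + 1 = i then 1 else if j = i then -1 else 0 :=
  csum_root ℓ h1 h2 ℓ j (by omega)

/-- In type `C_ℓ`, `σ = (σ_ℓ ⋯ σ_1)(σ_ℓ ⋯ σ_2) ⋯ (σ_ℓ)` satisfies `σ(-θ) = α_ℓ`,
`σ(α_j) = α_{ℓ-j}` for `1 ≤ j < ℓ`, and `σ(α_ℓ) = -θ`. -/
theorem typeC_element_on_simple_roots (ℓ : ℕ) (hℓ : 2 ≤ ℓ) :
    word ℓ (cartanC ℓ) (wordC ℓ) (-thetaC ℓ) = rootOf ℓ (cartanC ℓ) ℓ ∧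
    (∀ j, 1 ≤ j → j < ℓ →
      word ℓ (cartanC ℓ) (wordC ℓ) (rootOf ℓ (cartanC ℓ) j) = rootOf ℓ (cartanC ℓ) (ℓ - j)) ∧
    word ℓ (cartanC ℓ) (wordC ℓ) (rootOf ℓ (cartanC ℓ) ℓ) = -thetaC ℓ := by
  have hw : wordC ℓ = Wlist ℓ 0 := rfl
  have key := word_Wlist ℓ ℓ 0 (by omega)
  refine ⟨?_, ?_, ?_⟩
  · apply eq_of_csum ℓ
    intro j
    rw [hw, key]
    simp only [csum_neg, csum_theta ℓ hℓ, csum_root' ℓ (by omega : 1 ≤ ℓ) le_rfl]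
    split_ifs <;> omega
  · intro j hj1 hj2
    apply eq_of_csum ℓ
    intro i
    rw [hw, key]
    simp only [csum_root' ℓ hj1 (by omega : j ≤ ℓ),
      csum_root' ℓ (by omega : 1 ≤ ℓ - j) (by omega : ℓ - j ≤ ℓ)]
    split_ifs <;> omega
  · apply eq_of_csum ℓ
    intro j
    rw [hw, key]
    simp only [csum_neg, csum_theta ℓ hℓ, csum_root' ℓ (by omega : 1 ≤ ℓ) le_rfl]
    split_ifs <;> omega
end

section
/- In the root system of type D_ℓ with highest root θ = α_1 + 2α_2 + ⋯ + 2α_{ℓ−2} + α_{ℓ−1} + α_ℓ, the Weyl group element σ = σ_1σ_2⋯σ_ℓσ_{ℓ−2}σ_{ℓ−3}⋯σ_2σ_1 swaps α_1 with −θ, swaps α_{ℓ−1} with α_ℓ, and fixes α_j for 2 ≤ j ≤ ℓ−2. -/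
/-- The Cartan matrix of type `D_ℓ` (nodes `ℓ-1` and `ℓ` form the fork):
`α_i = -λ_{i-1} + 2λ_i - λ_{i+1}` for `i < ℓ-2`,
`α_{ℓ-2} = -λ_{ℓ-3} + 2λ_{ℓ-2} - λ_{ℓ-1} - λ_ℓ`,
`α_{ℓ-1} = -λ_{ℓ-2} + 2λ_{ℓ-1}`, and `α_ℓ = -λ_{ℓ-2} + 2λ_ℓ`. -/
def cartanD (ℓ : ℕ) : ℕ → ℕ → ℤ := fun i j =>
  if i = j then 2
  else if (i + 1 = j ∨ j + 1 = i) ∧ i ≤ ℓ - 2 ∧ j ≤ ℓ - 2 then -1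
  else if (i = ℓ - 2 ∧ (j = ℓ - 1 ∨ j = ℓ)) ∨ (j = ℓ - 2 ∧ (i = ℓ - 1 ∨ i = ℓ)) then -1
  else 0

/-- The highest root of type `D_ℓ`: `θ = α_1 + 2α_2 + ⋯ + 2α_{ℓ-2} + α_{ℓ-1} + α_ℓ`. -/
def thetaD (ℓ : ℕ) : Fin ℓ → ℤ :=
  rootOf ℓ (cartanD ℓ) 1 + (∑ i ∈ Finset.Icc 2 (ℓ - 2), 2 • rootOf ℓ (cartanD ℓ) i)
    + rootOf ℓ (cartanD ℓ) (ℓ - 1) + rootOf ℓ (cartanD ℓ) ℓ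

/-- The word `σ_1 σ_2 ⋯ σ_ℓ σ_{ℓ-2} σ_{ℓ-3} ⋯ σ_2 σ_1`. -/
def wordD1 (ℓ : ℕ) : List ℕ :=
  ((List.range ℓ).map (· + 1)) ++ ((List.range (ℓ - 2)).map (fun t => ℓ - 2 - t))
namespace TypeD

/-- `i`-th coordinate (0-indexed) of a weight, extended by 0. -/
def co (ℓ : ℕ) (μ : Fin ℓ → ℤ) (i : ℕ) : ℤ := if h : i < ℓ then μ ⟨i, h⟩ else 0

/-- sum of first `n` coordinates. -/
def psum (ℓ : ℕ) (μ : Fin ℓ → ℤ) (n : ℕ) : ℤ := ∑ i ∈ Finset.range n, co ℓ μ i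

theorem co_ext {ℓ : ℕ} {μ ν : Fin ℓ → ℤ} (h : ∀ i, i < ℓ → co ℓ μ i = co ℓ ν i) : μ = ν := by
  funext k
  have := h k.1 k.2
  simpa [co, k.2] using this

theorem co_neg {ℓ : ℕ} (μ : Fin ℓ → ℤ) (i : ℕ) : co ℓ (-μ) i = -co ℓ μ i := by
  by_cases h : i < ℓ <;> simp [co, h]

theorem co_sref {ℓ : ℕ} (C : ℕ → ℕ → ℤ) {i : ℕ} (h1 : 1 ≤ i) (h2 : i ≤ ℓ)
    (μ : Fin ℓ → ℤ) {k : ℕ} (hk : k < ℓ) :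
    co ℓ (sref ℓ C i μ) k = co ℓ μ k - co ℓ μ (i - 1) * C i (k + 1) := by
  have hi : i - 1 < ℓ := by omega
  simp [co, sref, h1, h2, hk, hi, rootOf, mul_comm]

theorem word_nil {ℓ : ℕ} (C : ℕ → ℕ → ℤ) (μ : Fin ℓ → ℤ) : word ℓ C [] μ = μ := rfl

theorem word_cons {ℓ : ℕ} (C : ℕ → ℕ → ℤ) (i : ℕ) (l : List ℕ) (μ : Fin ℓ → ℤ) :
    word ℓ C (i :: l) μ = sref ℓ C i (word ℓ C l μ) := rfl

theorem word_append {ℓ : ℕ} (C : ℕ → ℕ → ℤ) (l1 l2 : List ℕ) (μ : Fin ℓ → ℤ) :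
    word ℓ C (l1 ++ l2) μ = word ℓ C l1 (word ℓ C l2 μ) := by
  simp [word, List.foldr_append]

/-- ascending word `[1, 2, …, m]`. -/
def alist (m : ℕ) : List ℕ := (List.range m).map (· + 1)

/-- descending word `[m, m-1, …, 1]`. -/
def dlist (m : ℕ) : List ℕ := (List.range m).map (fun t => m - t)

theorem alist_succ (m : ℕ) : alist (m + 1) = alist m ++ [m + 1] := by
  simp [alist, List.range_succ]

theorem dlist_succ (m : ℕ) : dlist (m + 1) = (m + 1) :: dlist m := by
  simp only [dlist, List.range_succ_eq_map, List.map_cons, List.map_map, Nat.sub_zero]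
  congr 1
  apply List.map_congr_left
  intro t _
  simp only [Function.comp]
  omega

theorem wordD1_eq (ℓ : ℕ) : wordD1 ℓ = alist ℓ ++ dlist (ℓ - 2) := rfl

theorem psum_succ {ℓ : ℕ} (μ : Fin ℓ → ℤ) (n : ℕ) :
    psum ℓ μ (n + 1) = psum ℓ μ n + co ℓ μ n := Finset.sum_range_succ _ _

theorem psum_congr {ℓ : ℕ} (μ ν : Fin ℓ → ℤ) (n : ℕ) (h : ∀ i, i < n → co ℓ μ i = co ℓ ν i) :
    psum ℓ μ n = psum ℓ ν n :=
  Finset.sum_congr rfl fun i hi => h i (Finset.mem_range.mp hi)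

end TypeD
namespace TypeD

theorem co_rootOf {ℓ : ℕ} (C : ℕ → ℕ → ℤ) (i : ℕ) {k : ℕ} (hk : k < ℓ) :
    co ℓ (rootOf ℓ C i) k = C i (k + 1) := by simp [co, rootOf, hk]

theorem co_word_dlist {ℓ : ℕ} (hℓ : 4 ≤ ℓ) (μ : Fin ℓ → ℤ) :
    ∀ m, 1 ≤ m → m ≤ ℓ - 3 → ∀ k, k < ℓ →
    co ℓ (word ℓ (cartanD ℓ) (dlist m) μ) k =
      if k + 2 ≤ m then co ℓ μ (k + 1)
      else if k + 1 = m then -psum ℓ μ m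
      else if k = m then psum ℓ μ (m + 1)
      else co ℓ μ k := by
  intro m
  induction m with
  | zero => omega
  | succ m ih =>
    intro _ hm k hk
    rcases Nat.eq_zero_or_pos m with rfl | hm1
    · have hd : dlist 1 = [1] := rfl
      rw [hd, word_cons, word_nil, co_sref _ (le_refl 1) (by omega) _ hk]
      simp only [Nat.sub_self, Nat.zero_add, Nat.reduceAdd]
      have e2 : psum ℓ μ 1 = psum ℓ μ 0 + co ℓ μ 0 := psum_succ μ 0
      have e1 : psum ℓ μ 2 = psum ℓ μ 1 + co ℓ μ 1 := psum_succ μ 1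
      have e0 : psum ℓ μ 0 = 0 := Finset.sum_range_zero _
      have hcase : k = 0 ∨ k = 1 ∨ 2 ≤ k := by omega
      rcases hcase with rfl | rfl | h
      · have hC : cartanD ℓ 1 1 = 2 := by unfold cartanD; split_ifs <;> first | contradiction | omega
        rw [hC]; split_ifs <;> first | contradiction | omega
      · have hC : cartanD ℓ 1 2 = -1 := by
          unfold cartanD; split_ifs <;> first | contradiction | omega
        rw [hC]; split_ifs <;> first | contradiction | omega
      · have hC : cartanD ℓ 1 (k + 1) = 0 := by
          unfold cartanD; split_ifs <;> first | contradiction | omega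
        rw [hC]; split_ifs <;> first | contradiction | omega
    · rw [dlist_succ, word_cons, co_sref _ (by omega) (by omega) _ hk]
      simp only [Nat.add_sub_cancel]
      rw [ih hm1 (by omega) m (by omega), if_neg (by omega), if_neg (by omega),
        if_pos rfl, ih hm1 (by omega) k hk]
      have e1 : psum ℓ μ (m + 1 + 1) = psum ℓ μ (m + 1) + co ℓ μ (m + 1) := psum_succ μ (m + 1)
      have e2 : psum ℓ μ (m + 1) = psum ℓ μ m + co ℓ μ m := psum_succ μ m
      have hcase : k + 2 ≤ m ∨ k + 1 = m ∨ k = m ∨ k = m + 1 ∨ m + 2 ≤ k := by omega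
      rcases hcase with h | h | h | h | h
      · have hC : cartanD ℓ (m + 1) (k + 1) = 0 := by
          unfold cartanD; split_ifs <;> first | contradiction | omega
        rw [hC]; split_ifs <;> first | contradiction | omega
      · subst h
        have hC : cartanD ℓ (k + 1 + 1) (k + 1) = -1 := by
          unfold cartanD; split_ifs <;> first | contradiction | omega
        rw [hC]; split_ifs <;> first | contradiction | omega
      · subst h
        have hC : cartanD ℓ (k + 1) (k + 1) = 2 := by unfold cartanD; split_ifs <;> first | contradiction | omega
        rw [hC]; split_ifs <;> first | contradiction | omega
      · subst h
        have hC : cartanD ℓ (m + 1) (m + 1 + 1) = -1 := by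
          unfold cartanD; split_ifs <;> first | contradiction | omega
        rw [hC]; split_ifs <;> first | contradiction | omega
      · have hC : cartanD ℓ (m + 1) (k + 1) = 0 := by
          unfold cartanD; split_ifs <;> first | contradiction | omega
        rw [hC]; split_ifs <;> first | contradiction | omega

end TypeD
namespace TypeD

theorem co_word_dlist_top {ℓ : ℕ} (hℓ : 4 ≤ ℓ) (μ : Fin ℓ → ℤ) {k : ℕ} (hk : k < ℓ) :
    co ℓ (word ℓ (cartanD ℓ) (dlist (ℓ - 2)) μ) k =
      if k + 4 ≤ ℓ then co ℓ μ (k + 1)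
      else if k + 3 = ℓ then -psum ℓ μ (ℓ - 2)
      else if k + 2 = ℓ then psum ℓ μ (ℓ - 2) + co ℓ μ (ℓ - 2)
      else psum ℓ μ (ℓ - 2) + co ℓ μ (ℓ - 1) := by
  obtain ⟨n, rfl⟩ : ∃ n, ℓ = n + 4 := ⟨ℓ - 4, by omega⟩
  simp only [show n + 4 - 2 = n + 2 from rfl, show n + 4 - 1 = n + 3 from rfl]
  rw [show dlist (n + 2) = (n + 2) :: dlist (n + 1) from dlist_succ (n + 1),
    word_cons, co_sref _ (by omega) (by omega) _ hk]
  simp only [show n + 2 - 1 = n + 1 from rfl]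
  rw [co_word_dlist hℓ μ (n + 1) (by omega) (by omega) (n + 1) (by omega),
    if_neg (by omega), if_neg (by omega), if_pos rfl,
    co_word_dlist hℓ μ (n + 1) (by omega) (by omega) k hk]
  simp only [show n + 1 + 1 = n + 2 from rfl]
  have eA : psum (n + 4) μ (n + 2) = psum (n + 4) μ (n + 1) + co (n + 4) μ (n + 1) :=
    psum_succ μ (n + 1)
  have hcase : k + 2 ≤ n + 1 ∨ k + 1 = n + 1 ∨ k = n + 1 ∨ k = n + 2 ∨ k = n + 3 := by omega
  rcases hcase with h | h | h | h | h
  · have hC : cartanD (n + 4) (n + 2) (k + 1) = 0 := by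
      unfold cartanD; split_ifs <;> first | contradiction | omega
    rw [hC]; split_ifs <;> first | contradiction | omega
  · have hk' : n = k := by omega
    subst hk'
    have hC : cartanD (n + 4) (n + 2) (n + 1) = -1 := by
      unfold cartanD; split_ifs <;> first | contradiction | omega
    rw [hC]; split_ifs <;> first | contradiction | omega
  · subst h
    have hC : cartanD (n + 4) (n + 2) (n + 2) = 2 := by
      unfold cartanD; split_ifs <;> first | contradiction | omega
    simp only [show n + 1 + 2 = n + 3 from rfl] at *
    rw [hC]; split_ifs <;> first | contradiction | omega
  · subst h
    have hC : cartanD (n + 4) (n + 2) (n + 3) = -1 := by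
      unfold cartanD; split_ifs <;> first | contradiction | omega
    simp only [show n + 2 + 1 = n + 3 from rfl] at *
    rw [hC]; split_ifs <;> first | contradiction | omega
  · subst h
    have hC : cartanD (n + 4) (n + 2) (n + 4) = -1 := by
      unfold cartanD; split_ifs <;> first | contradiction | omega
    simp only [show n + 3 + 1 = n + 4 from rfl] at *
    rw [hC]; split_ifs <;> first | contradiction | omega

theorem co_phase1 {ℓ : ℕ} (hℓ : 4 ≤ ℓ) (μ : Fin ℓ → ℤ) {k : ℕ} (hk : k < ℓ) :
    co ℓ (sref ℓ (cartanD ℓ) (ℓ - 1)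
        (sref ℓ (cartanD ℓ) ℓ (word ℓ (cartanD ℓ) (dlist (ℓ - 2)) μ))) k =
      if k + 4 ≤ ℓ then co ℓ μ (k + 1)
      else if k + 3 = ℓ then psum ℓ μ ℓ
      else if k + 2 = ℓ then -psum ℓ μ (ℓ - 1)
      else -(psum ℓ μ (ℓ - 2) + co ℓ μ (ℓ - 1)) := by
  obtain ⟨n, rfl⟩ : ∃ n, ℓ = n + 4 := ⟨ℓ - 4, by omega⟩
  simp only [show n + 4 - 2 = n + 2 from rfl, show n + 4 - 1 = n + 3 from rfl,
    show n + 4 - 3 = n + 1 from rfl]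
  rw [co_sref _ (i := n + 3) (by omega) (by omega) _ hk]
  simp only [show n + 3 - 1 = n + 2 from rfl]
  rw [co_sref _ (i := n + 4) (by omega) (by omega) _ hk,
    co_sref _ (i := n + 4) (by omega) (by omega) (μ := word _ _ _ μ) (k := n + 2) (by omega)]
  simp only [show n + 4 - 1 = n + 3 from rfl]
  have dt := fun (k' : ℕ) (hk' : k' < n + 4) => co_word_dlist_top hℓ μ (k := k') hk'
  simp only [show n + 4 - 2 = n + 2 from rfl, show n + 4 - 1 = n + 3 from rfl] at dt
  have hC1 : cartanD (n + 4) (n + 4) (n + 2 + 1) = 0 := by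
    unfold cartanD; split_ifs <;> first | contradiction | omega
  rw [dt (n + 3) (by omega), if_neg (by omega), if_neg (by omega), if_neg (by omega),
    dt (n + 2) (by omega), if_neg (by omega), if_neg (by omega), if_pos (by omega),
    dt k hk, hC1]
  have eB : psum (n + 4) μ (n + 3) = psum (n + 4) μ (n + 2) + co (n + 4) μ (n + 2) :=
    psum_succ μ (n + 2)
  have eC : psum (n + 4) μ (n + 4) = psum (n + 4) μ (n + 3) + co (n + 4) μ (n + 3) :=
    psum_succ μ (n + 3)
  have hcase : k + 4 ≤ n + 4 ∨ k = n + 1 ∨ k = n + 2 ∨ k = n + 3 := by omega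
  rcases hcase with h | h | h | h
  · have hC2 : cartanD (n + 4) (n + 4) (k + 1) = 0 := by
      unfold cartanD; split_ifs <;> first | contradiction | omega
    have hC3 : cartanD (n + 4) (n + 3) (k + 1) = 0 := by
      unfold cartanD; split_ifs <;> first | contradiction | omega
    rw [hC2, hC3]; split_ifs <;> first | contradiction | omega
  · subst h
    have hC2 : cartanD (n + 4) (n + 4) (n + 1 + 1) = -1 := by
      unfold cartanD; split_ifs <;> first | contradiction | omega
    have hC3 : cartanD (n + 4) (n + 3) (n + 1 + 1) = -1 := by
      unfold cartanD; split_ifs <;> first | contradiction | omega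
    rw [hC2, hC3]; split_ifs <;> first | contradiction | omega
  · subst h
    have hC2 : cartanD (n + 4) (n + 4) (n + 2 + 1) = 0 := by
      unfold cartanD; split_ifs <;> first | contradiction | omega
    have hC3 : cartanD (n + 4) (n + 3) (n + 2 + 1) = 2 := by
      unfold cartanD; split_ifs <;> first | contradiction | omega
    rw [hC2, hC3]; split_ifs <;> first | contradiction | omega
  · subst h
    have hC2 : cartanD (n + 4) (n + 4) (n + 3 + 1) = 2 := by
      unfold cartanD; split_ifs <;> first | contradiction | omega
    have hC3 : cartanD (n + 4) (n + 3) (n + 3 + 1) = 0 := by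
      unfold cartanD; split_ifs <;> first | contradiction | omega
    rw [hC2, hC3]; split_ifs <;> first | contradiction | omega

end TypeD
namespace TypeD

theorem co_word_alist {ℓ : ℕ} (hℓ : 4 ≤ ℓ) :
    ∀ m, 1 ≤ m → m ≤ ℓ - 3 → ∀ (μ : Fin ℓ → ℤ) (k : ℕ), k < ℓ →
    co ℓ (word ℓ (cartanD ℓ) (alist m) μ) k =
      if k = 0 then -psum ℓ μ m
      else if k ≤ m - 1 then co ℓ μ (k - 1)
      else if k = m then co ℓ μ (m - 1) + co ℓ μ m
      else co ℓ μ k := by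
  intro m
  induction m with
  | zero => omega
  | succ m ih =>
    intro _ hm μ k hk
    rcases Nat.eq_zero_or_pos m with rfl | hm1
    · have ha : alist 1 = [1] := rfl
      rw [show (0:ℕ) + 1 = 1 from rfl, ha, word_cons, word_nil,
        co_sref _ (le_refl 1) (by omega) _ hk]
      simp only [Nat.sub_self, show (1:ℕ) - 1 = 0 from rfl]
      have e1 : psum ℓ μ 1 = psum ℓ μ 0 + co ℓ μ 0 := psum_succ μ 0
      have e0 : psum ℓ μ 0 = 0 := Finset.sum_range_zero _
      have hcase : k = 0 ∨ k = 1 ∨ 2 ≤ k := by omega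
      rcases hcase with rfl | rfl | h
      · have hC : cartanD ℓ 1 1 = 2 := by unfold cartanD; split_ifs <;> first | contradiction | omega
        rw [hC]; split_ifs <;> first | contradiction | omega
      · have hC : cartanD ℓ 1 2 = -1 := by unfold cartanD; split_ifs <;> first | contradiction | omega
        rw [hC]; split_ifs <;> first | contradiction | omega
      · have hC : cartanD ℓ 1 (k + 1) = 0 := by unfold cartanD; split_ifs <;> first | contradiction | omega
        rw [hC]; split_ifs <;> first | contradiction | omega
    · obtain ⟨p, rfl⟩ : ∃ p, m = p + 1 := ⟨m - 1, by omega⟩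
      rw [alist_succ, word_append]
      have hw : word ℓ (cartanD ℓ) [p + 1 + 1] μ = sref ℓ (cartanD ℓ) (p + 1 + 1) μ := rfl
      rw [hw, ih (by omega) (by omega) _ k hk]
      simp only [show p + 1 + 1 = p + 2 from rfl, show p + 2 - 1 = p + 1 from rfl,
        show p + 1 - 1 = p from rfl]
      have hν : ∀ j, j < ℓ →
          co ℓ (sref ℓ (cartanD ℓ) (p + 2) μ) j
            = co ℓ μ j - co ℓ μ (p + 1) * cartanD ℓ (p + 2) (j + 1) := by
        intro j hj
        rw [co_sref _ (by omega) (by omega) _ hj]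
        simp only [show p + 2 - 1 = p + 1 from rfl]
      have hCp : cartanD ℓ (p + 2) (p + 1) = -1 := by unfold cartanD; split_ifs <;> first | contradiction | omega
      have hCq : cartanD ℓ (p + 2) (p + 2) = 2 := by unfold cartanD; split_ifs <;> first | contradiction | omega
      have hCr : cartanD ℓ (p + 2) (p + 3) = -1 := by unfold cartanD; split_ifs <;> first | contradiction | omega
      have fp : co ℓ (sref ℓ (cartanD ℓ) (p + 2) μ) p = co ℓ μ p + co ℓ μ (p + 1) := by
        rw [hν p (by omega), hCp]; ring
      have fq : co ℓ (sref ℓ (cartanD ℓ) (p + 2) μ) (p + 1) = -co ℓ μ (p + 1) := by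
        rw [hν (p + 1) (by omega), hCq]; ring
      have fr : co ℓ (sref ℓ (cartanD ℓ) (p + 2) μ) (p + 2)
          = co ℓ μ (p + 2) + co ℓ μ (p + 1) := by
        rw [hν (p + 2) (by omega), hCr]; ring
      have hps : psum ℓ (sref ℓ (cartanD ℓ) (p + 2) μ) (p + 1) = psum ℓ μ (p + 2) := by
        rw [psum_succ, psum_succ, psum_succ (μ := μ) (n := p), fp]
        have : psum ℓ (sref ℓ (cartanD ℓ) (p + 2) μ) p = psum ℓ μ p := by
          apply psum_congr
          intro i hi
          have hC0 : cartanD ℓ (p + 2) (i + 1) = 0 := by unfold cartanD; split_ifs <;> first | contradiction | omega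
          rw [hν i (by omega), hC0]; ring
        rw [this]; ring
      have hcase : k = 0 ∨ (1 ≤ k ∧ k ≤ p) ∨ k = p + 1 ∨ k = p + 2 ∨ p + 3 ≤ k := by omega
      rcases hcase with rfl | h | h | h | h
      · rw [if_pos rfl, if_pos rfl, hps]
      · have hk1 : co ℓ (sref ℓ (cartanD ℓ) (p + 2) μ) (k - 1) = co ℓ μ (k - 1) := by
          have hC0 : cartanD ℓ (p + 2) (k - 1 + 1) = 0 := by unfold cartanD; split_ifs <;> first | contradiction | omega
          rw [hν (k - 1) (by omega), hC0]; ring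
        rw [if_neg (by omega), if_pos (by omega), hk1, if_neg (by omega), if_pos (by omega)]
      · subst h
        rw [if_neg (by omega), if_neg (by omega), if_pos rfl, fp, fq,
          if_neg (by omega), if_pos (by omega)]
        simp only [show p + 1 - 1 = p from rfl]
        ring
      · subst h
        rw [if_neg (by omega), if_neg (by omega), if_neg (by omega), fr,
          if_neg (by omega), if_neg (by omega), if_pos rfl]
        ring
      · have hkk : co ℓ (sref ℓ (cartanD ℓ) (p + 2) μ) k = co ℓ μ k := by
          have hC0 : cartanD ℓ (p + 2) (k + 1) = 0 := by unfold cartanD; split_ifs <;> first | contradiction | omega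
          rw [hν k hk, hC0]; ring
        rw [if_neg (by omega), if_neg (by omega), if_neg (by omega), hkk,
          if_neg (by omega), if_neg (by omega), if_neg (by omega)]

end TypeD
namespace TypeD

theorem co_word_alist_top {ℓ : ℕ} (hℓ : 4 ≤ ℓ) (μ : Fin ℓ → ℤ) {k : ℕ} (hk : k < ℓ) :
    co ℓ (word ℓ (cartanD ℓ) (alist (ℓ - 2)) μ) k =
      if k = 0 then -psum ℓ μ (ℓ - 2)
      else if k + 3 ≤ ℓ then co ℓ μ (k - 1)
      else if k + 2 = ℓ then co ℓ μ (ℓ - 3) + co ℓ μ (ℓ - 2)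
      else co ℓ μ (ℓ - 3) + co ℓ μ (ℓ - 1) := by
  obtain ⟨n, rfl⟩ : ∃ n, ℓ = n + 4 := ⟨ℓ - 4, by omega⟩
  simp only [show n + 4 - 2 = n + 2 from rfl, show n + 4 - 3 = n + 1 from rfl,
    show n + 4 - 1 = n + 3 from rfl]
  rw [show alist (n + 2) = alist (n + 1) ++ [n + 2] from alist_succ (n + 1), word_append]
  have hw : word (n + 4) (cartanD (n + 4)) [n + 2] μ = sref (n + 4) (cartanD (n + 4)) (n + 2) μ :=
    rfl
  rw [hw, co_word_alist hℓ (n + 1) (by omega) (by omega) _ k hk]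
  simp only [show n + 1 - 1 = n from rfl]
  have hν : ∀ j, j < n + 4 →
      co (n + 4) (sref (n + 4) (cartanD (n + 4)) (n + 2) μ) j
        = co (n + 4) μ j - co (n + 4) μ (n + 1) * cartanD (n + 4) (n + 2) (j + 1) := by
    intro j hj
    rw [co_sref _ (by omega) (by omega) _ hj]
    simp only [show n + 2 - 1 = n + 1 from rfl]
  have fp : co (n + 4) (sref (n + 4) (cartanD (n + 4)) (n + 2) μ) n
      = co (n + 4) μ n + co (n + 4) μ (n + 1) := by
    have hC : cartanD (n + 4) (n + 2) (n + 1) = -1 := by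
      unfold cartanD; split_ifs <;> first | contradiction | omega
    rw [hν n (by omega), hC]; ring
  have fq : co (n + 4) (sref (n + 4) (cartanD (n + 4)) (n + 2) μ) (n + 1)
      = -co (n + 4) μ (n + 1) := by
    have hC : cartanD (n + 4) (n + 2) (n + 1 + 1) = 2 := by
      unfold cartanD; split_ifs <;> first | contradiction | omega
    rw [hν (n + 1) (by omega), hC]; ring
  have fr : co (n + 4) (sref (n + 4) (cartanD (n + 4)) (n + 2) μ) (n + 2)
      = co (n + 4) μ (n + 2) + co (n + 4) μ (n + 1) := by
    have hC : cartanD (n + 4) (n + 2) (n + 2 + 1) = -1 := by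
      unfold cartanD; split_ifs <;> first | contradiction | omega
    rw [hν (n + 2) (by omega), hC]; ring
  have fs : co (n + 4) (sref (n + 4) (cartanD (n + 4)) (n + 2) μ) (n + 3)
      = co (n + 4) μ (n + 3) + co (n + 4) μ (n + 1) := by
    have hC : cartanD (n + 4) (n + 2) (n + 3 + 1) = -1 := by
      unfold cartanD; split_ifs <;> first | contradiction | omega
    rw [hν (n + 3) (by omega), hC]; ring
  have hps : psum (n + 4) (sref (n + 4) (cartanD (n + 4)) (n + 2) μ) (n + 1)
      = psum (n + 4) μ (n + 2) := by
    rw [psum_succ, psum_succ (μ := μ) (n := n + 1), psum_succ (μ := μ) (n := n), fp]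
    have : psum (n + 4) (sref (n + 4) (cartanD (n + 4)) (n + 2) μ) n = psum (n + 4) μ n := by
      apply psum_congr
      intro i hi
      have hC0 : cartanD (n + 4) (n + 2) (i + 1) = 0 := by
        unfold cartanD; split_ifs <;> first | contradiction | omega
      rw [hν i (by omega), hC0]; ring
    rw [this]; ring
  have hcase : k = 0 ∨ (1 ≤ k ∧ k ≤ n) ∨ k = n + 1 ∨ k = n + 2 ∨ k = n + 3 := by omega
  rcases hcase with rfl | h | h | h | h
  · rw [if_pos rfl, if_pos rfl, hps]
  · have hk1 : co (n + 4) (sref (n + 4) (cartanD (n + 4)) (n + 2) μ) (k - 1)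
        = co (n + 4) μ (k - 1) := by
      have hC0 : cartanD (n + 4) (n + 2) (k - 1 + 1) = 0 := by
        unfold cartanD; split_ifs <;> first | contradiction | omega
      rw [hν (k - 1) (by omega), hC0]; ring
    rw [if_neg (by omega), if_pos (by omega), hk1, if_neg (by omega), if_pos (by omega)]
  · subst h
    rw [if_neg (by omega), if_neg (by omega), if_pos rfl, fp, fq,
      if_neg (by omega), if_pos (by omega)]
    simp only [show n + 1 - 1 = n from rfl]
    ring
  · subst h
    rw [if_neg (by omega), if_neg (by omega), if_neg (by omega), fr,
      if_neg (by omega), if_neg (by omega), if_pos (by omega)]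
    ring
  · subst h
    rw [if_neg (by omega), if_neg (by omega), if_neg (by omega), fs,
      if_neg (by omega), if_neg (by omega), if_neg (by omega)]
    ring

theorem co_word_full {ℓ : ℕ} (hℓ : 4 ≤ ℓ) (μ : Fin ℓ → ℤ) {k : ℕ} (hk : k < ℓ) :
    co ℓ (word ℓ (cartanD ℓ) (wordD1 ℓ) μ) k =
      if k = 0 then co ℓ μ 0 - psum ℓ μ (ℓ - 2) - psum ℓ μ ℓ
      else if k + 3 ≤ ℓ then co ℓ μ k
      else if k + 2 = ℓ then co ℓ μ (ℓ - 1)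
      else co ℓ μ (ℓ - 2) := by
  obtain ⟨n, rfl⟩ : ∃ n, ℓ = n + 4 := ⟨ℓ - 4, by omega⟩
  simp only [show n + 4 - 2 = n + 2 from rfl, show n + 4 - 1 = n + 3 from rfl]
  have hsplit : wordD1 (n + 4)
      = (alist (n + 2) ++ [n + 3] ++ [n + 4]) ++ dlist (n + 2) := by
    rw [show (alist (n + 2) ++ [n + 3] ++ [n + 4]) = alist (n + 4) from by
      rw [show alist (n + 4) = alist (n + 3) ++ [n + 4] from alist_succ (n + 3),
        show alist (n + 3) = alist (n + 2) ++ [n + 3] from alist_succ (n + 2)]]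
    rfl
  rw [hsplit, word_append, word_append, word_append]
  have hw1 : ∀ ν : Fin (n + 4) → ℤ, word (n + 4) (cartanD (n + 4)) [n + 4] ν
      = sref (n + 4) (cartanD (n + 4)) (n + 4) ν := fun _ => rfl
  have hw2 : ∀ ν : Fin (n + 4) → ℤ, word (n + 4) (cartanD (n + 4)) [n + 3] ν
      = sref (n + 4) (cartanD (n + 4)) (n + 3) ν := fun _ => rfl
  rw [hw1, hw2]
  set u := sref (n + 4) (cartanD (n + 4)) (n + 3)
    (sref (n + 4) (cartanD (n + 4)) (n + 4)
      (word (n + 4) (cartanD (n + 4)) (dlist (n + 2)) μ)) with hu_def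
  have hu : ∀ j, j < n + 4 → co (n + 4) u j =
      if j + 4 ≤ n + 4 then co (n + 4) μ (j + 1)
      else if j + 3 = n + 4 then psum (n + 4) μ (n + 4)
      else if j + 2 = n + 4 then -psum (n + 4) μ (n + 3)
      else -(psum (n + 4) μ (n + 2) + co (n + 4) μ (n + 3)) := by
    intro j hj
    have := co_phase1 (ℓ := n + 4) hℓ μ (k := j) hj
    simpa [show n + 4 - 2 = n + 2 from rfl, show n + 4 - 1 = n + 3 from rfl] using this
  have dA := fun (k' : ℕ) (hk' : k' < n + 4) => co_word_alist_top hℓ u (k := k') hk'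
  simp only [show n + 4 - 2 = n + 2 from rfl, show n + 4 - 3 = n + 1 from rfl,
    show n + 4 - 1 = n + 3 from rfl] at dA
  rw [dA k hk]
  have eB : psum (n + 4) μ (n + 3) = psum (n + 4) μ (n + 2) + co (n + 4) μ (n + 2) :=
    psum_succ μ (n + 2)
  have eC : psum (n + 4) μ (n + 4) = psum (n + 4) μ (n + 3) + co (n + 4) μ (n + 3) :=
    psum_succ μ (n + 3)
  have fu1 : co (n + 4) u (n + 1) = psum (n + 4) μ (n + 4) := by
    rw [hu (n + 1) (by omega), if_neg (by omega), if_pos (by omega)]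
  have fu2 : co (n + 4) u (n + 2) = -psum (n + 4) μ (n + 3) := by
    rw [hu (n + 2) (by omega), if_neg (by omega), if_neg (by omega), if_pos (by omega)]
  have fu3 : co (n + 4) u (n + 3) = -(psum (n + 4) μ (n + 2) + co (n + 4) μ (n + 3)) := by
    rw [hu (n + 3) (by omega), if_neg (by omega), if_neg (by omega), if_neg (by omega)]
  have hcase : k = 0 ∨ (1 ≤ k ∧ k + 3 ≤ n + 4) ∨ k = n + 2 ∨ k = n + 3 := by omega
  rcases hcase with rfl | h | h | h
  · rw [if_pos rfl, if_pos rfl]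
    have hps : psum (n + 4) u (n + 2) =
        (psum (n + 4) μ (n + 2) - co (n + 4) μ 0) + psum (n + 4) μ (n + 4) := by
      rw [psum_succ, fu1]
      have h1 : psum (n + 4) u (n + 1) = ∑ i ∈ Finset.range (n + 1), co (n + 4) μ (i + 1) := by
        apply Finset.sum_congr rfl
        intro i hi
        have hi' : i < n + 1 := Finset.mem_range.mp hi
        rw [hu i (by omega), if_pos (by omega)]
      have h2 : psum (n + 4) μ (n + 2)
          = (∑ i ∈ Finset.range (n + 1), co (n + 4) μ (i + 1)) + co (n + 4) μ 0 :=
        Finset.sum_range_succ' _ (n + 1)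
      rw [h1]
      omega
    rw [hps]
    ring
  · have hk1 : co (n + 4) u (k - 1) = co (n + 4) μ k := by
      rw [hu (k - 1) (by omega), if_pos (by omega), show k - 1 + 1 = k from by omega]
    rw [if_neg (by omega), if_pos (by omega), hk1, if_neg (by omega), if_pos (by omega)]
  · subst h
    rw [if_neg (by omega), if_neg (by omega), if_pos rfl, fu1, fu2,
      if_neg (by omega), if_neg (by omega), if_pos (by omega)]
    omega
  · subst h
    rw [if_neg (by omega), if_neg (by omega), if_neg (by omega), fu1, fu3,
      if_neg (by omega), if_neg (by omega), if_neg (by omega)]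
    omega

end TypeD
namespace TypeD

theorem sum_spike {s : Finset ℕ} (a : ℕ) (v : ℤ) :
    (∑ i ∈ s, if i = a then v else 0) = if a ∈ s then v else 0 :=
  Finset.sum_ite_eq' s a (fun _ => v)

theorem co_theta {ℓ : ℕ} (hℓ : 4 ≤ ℓ) {k : ℕ} (hk : k < ℓ) :
    co ℓ (thetaD ℓ) k = if k = 1 then 1 else 0 := by
  obtain ⟨n, rfl⟩ : ∃ n, ℓ = n + 4 := ⟨ℓ - 4, by omega⟩
  have hexp : co (n + 4) (thetaD (n + 4)) k
      = cartanD (n + 4) 1 (k + 1)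
        + (∑ i ∈ Finset.Icc 2 (n + 2), 2 * cartanD (n + 4) i (k + 1))
        + cartanD (n + 4) (n + 3) (k + 1) + cartanD (n + 4) (n + 4) (k + 1) := by
    simp [thetaD, co, hk, rootOf, Finset.sum_apply, show n + 4 - 2 = n + 2 from rfl,
      show n + 4 - 1 = n + 3 from rfl]
  rw [hexp]
  have hcase : k = 0 ∨ k = 1 ∨ (2 ≤ k ∧ k ≤ n) ∨ (2 ≤ k ∧ k = n + 1) ∨ k = n + 2 ∨ k = n + 3 :=
    by omega
  have hmem : ∀ a : ℕ, 2 ≤ a → a ≤ n + 2 → a ∈ Finset.Icc 2 (n + 2) := by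
    intro a h1 h2; rw [Finset.mem_Icc]; omega
  rcases hcase with rfl | rfl | h | h | h | h
  · have hcg : ∀ i ∈ Finset.Icc 2 (n + 2), 2 * cartanD (n + 4) i (0 + 1)
        = if i = 2 then -2 else 0 := by
      intro i hi
      rw [Finset.mem_Icc] at hi
      unfold cartanD; split_ifs <;> first | contradiction | omega
    rw [Finset.sum_congr rfl hcg, sum_spike, if_pos (hmem 2 (by omega) (by omega))]
    have h1 : cartanD (n + 4) 1 (0 + 1) = 2 := by
      unfold cartanD; split_ifs <;> first | contradiction | omega
    have h2 : cartanD (n + 4) (n + 3) (0 + 1) = 0 := by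
      unfold cartanD; split_ifs <;> first | contradiction | omega
    have h3 : cartanD (n + 4) (n + 4) (0 + 1) = 0 := by
      unfold cartanD; split_ifs <;> first | contradiction | omega
    rw [h1, h2, h3]; norm_num
  · have hcg : ∀ i ∈ Finset.Icc 2 (n + 2), 2 * cartanD (n + 4) i (1 + 1)
        = (if i = 2 then 4 else 0) + (if i = 3 then -2 else 0) := by
      intro i hi
      rw [Finset.mem_Icc] at hi
      unfold cartanD; split_ifs <;> first | contradiction | omega
    rw [Finset.sum_congr rfl hcg, Finset.sum_add_distrib, sum_spike, sum_spike,
      if_pos (hmem 2 (by omega) (by omega))]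
    have h1 : cartanD (n + 4) 1 (1 + 1) = -1 := by
      unfold cartanD; split_ifs <;> first | contradiction | omega
    rw [h1]
    rcases Nat.eq_zero_or_pos n with rfl | hn
    · rw [if_neg (by rw [Finset.mem_Icc]; omega)]
      have h2 : cartanD (0 + 4) (0 + 3) (1 + 1) = -1 := by
        unfold cartanD; split_ifs <;> first | contradiction | omega
      have h3 : cartanD (0 + 4) (0 + 4) (1 + 1) = -1 := by
        unfold cartanD; split_ifs <;> first | contradiction | omega
      rw [h2, h3]; norm_num
    · rw [if_pos (hmem 3 (by omega) (by omega))]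
      have h2 : cartanD (n + 4) (n + 3) (1 + 1) = 0 := by
        unfold cartanD; split_ifs <;> first | contradiction | omega
      have h3 : cartanD (n + 4) (n + 4) (1 + 1) = 0 := by
        unfold cartanD; split_ifs <;> first | contradiction | omega
      rw [h2, h3]; norm_num
  · have hcg : ∀ i ∈ Finset.Icc 2 (n + 2), 2 * cartanD (n + 4) i (k + 1)
        = (if i = k then -2 else 0) + (if i = k + 1 then 4 else 0)
          + (if i = k + 2 then -2 else 0) := by
      intro i hi
      rw [Finset.mem_Icc] at hi
      unfold cartanD; split_ifs <;> first | contradiction | omega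
    rw [Finset.sum_congr rfl hcg, Finset.sum_add_distrib, Finset.sum_add_distrib,
      sum_spike, sum_spike, sum_spike,
      if_pos (hmem k (by omega) (by omega)), if_pos (hmem (k + 1) (by omega) (by omega)),
      if_pos (hmem (k + 2) (by omega) (by omega))]
    have h1 : cartanD (n + 4) 1 (k + 1) = 0 := by
      unfold cartanD; split_ifs <;> first | contradiction | omega
    have h2 : cartanD (n + 4) (n + 3) (k + 1) = 0 := by
      unfold cartanD; split_ifs <;> first | contradiction | omega
    have h3 : cartanD (n + 4) (n + 4) (k + 1) = 0 := by
      unfold cartanD; split_ifs <;> first | contradiction | omega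
    rw [h1, h2, h3, if_neg (by omega)]; norm_num
  · obtain ⟨hk2, rfl⟩ := h
    have hcg : ∀ i ∈ Finset.Icc 2 (n + 2), 2 * cartanD (n + 4) i (n + 1 + 1)
        = (if i = n + 1 then -2 else 0) + (if i = n + 2 then 4 else 0) := by
      intro i hi
      rw [Finset.mem_Icc] at hi
      unfold cartanD; split_ifs <;> first | contradiction | omega
    rw [Finset.sum_congr rfl hcg, Finset.sum_add_distrib, sum_spike, sum_spike,
      if_pos (hmem (n + 1) (by omega) (by omega)), if_pos (hmem (n + 2) (by omega) (by omega))]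
    have h1 : cartanD (n + 4) 1 (n + 1 + 1) = 0 := by
      unfold cartanD; split_ifs <;> first | contradiction | omega
    have h2 : cartanD (n + 4) (n + 3) (n + 1 + 1) = -1 := by
      unfold cartanD; split_ifs <;> first | contradiction | omega
    have h3 : cartanD (n + 4) (n + 4) (n + 1 + 1) = -1 := by
      unfold cartanD; split_ifs <;> first | contradiction | omega
    rw [h1, h2, h3, if_neg (by omega)]; norm_num
  · subst h
    have hcg : ∀ i ∈ Finset.Icc 2 (n + 2), 2 * cartanD (n + 4) i (n + 2 + 1)
        = if i = n + 2 then -2 else 0 := by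
      intro i hi
      rw [Finset.mem_Icc] at hi
      unfold cartanD; split_ifs <;> first | contradiction | omega
    rw [Finset.sum_congr rfl hcg, sum_spike, if_pos (hmem (n + 2) (by omega) (by omega))]
    have h1 : cartanD (n + 4) 1 (n + 2 + 1) = 0 := by
      unfold cartanD; split_ifs <;> first | contradiction | omega
    have h2 : cartanD (n + 4) (n + 3) (n + 2 + 1) = 2 := by
      unfold cartanD; split_ifs <;> first | contradiction | omega
    have h3 : cartanD (n + 4) (n + 4) (n + 2 + 1) = 0 := by
      unfold cartanD; split_ifs <;> first | contradiction | omega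
    rw [h1, h2, h3, if_neg (by omega)]; norm_num
  · subst h
    have hcg : ∀ i ∈ Finset.Icc 2 (n + 2), 2 * cartanD (n + 4) i (n + 3 + 1)
        = if i = n + 2 then -2 else 0 := by
      intro i hi
      rw [Finset.mem_Icc] at hi
      unfold cartanD; split_ifs <;> first | contradiction | omega
    rw [Finset.sum_congr rfl hcg, sum_spike, if_pos (hmem (n + 2) (by omega) (by omega))]
    have h1 : cartanD (n + 4) 1 (n + 3 + 1) = 0 := by
      unfold cartanD; split_ifs <;> first | contradiction | omega
    have h2 : cartanD (n + 4) (n + 3) (n + 3 + 1) = 0 := by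
      unfold cartanD; split_ifs <;> first | contradiction | omega
    have h3 : cartanD (n + 4) (n + 4) (n + 3 + 1) = 2 := by
      unfold cartanD; split_ifs <;> first | contradiction | omega
    rw [h1, h2, h3, if_neg (by omega)]; norm_num

end TypeD
namespace TypeD

theorem psum_spikes4 {ℓ : ℕ} (μ : Fin ℓ → ℤ) (t a b c d : ℕ) (va vb vc vd : ℤ)
    (h : ∀ j, j < t → co ℓ μ j = (if j = a then va else 0) + (if j = b then vb else 0)
      + (if j = c then vc else 0) + (if j = d then vd else 0)) :
    psum ℓ μ t = (if a < t then va else 0) + (if b < t then vb else 0)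
      + (if c < t then vc else 0) + (if d < t then vd else 0) := by
  unfold psum
  rw [Finset.sum_congr rfl (fun j hj => h j (Finset.mem_range.mp hj)),
    Finset.sum_add_distrib, Finset.sum_add_distrib, Finset.sum_add_distrib,
    sum_spike, sum_spike, sum_spike, sum_spike]
  simp [Finset.mem_range]

end TypeD

open TypeD in
set_option maxHeartbeats 2000000 in
theorem typeD_element1_on_simple_roots' (ℓ : ℕ) (hℓ : 4 ≤ ℓ) :
    word ℓ (cartanD ℓ) (wordD1 ℓ) (rootOf ℓ (cartanD ℓ) 1) = -thetaD ℓ ∧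
    word ℓ (cartanD ℓ) (wordD1 ℓ) (-thetaD ℓ) = rootOf ℓ (cartanD ℓ) 1 ∧
    word ℓ (cartanD ℓ) (wordD1 ℓ) (rootOf ℓ (cartanD ℓ) (ℓ - 1)) = rootOf ℓ (cartanD ℓ) ℓ ∧
    word ℓ (cartanD ℓ) (wordD1 ℓ) (rootOf ℓ (cartanD ℓ) ℓ) = rootOf ℓ (cartanD ℓ) (ℓ - 1) ∧
    ∀ j, 2 ≤ j → j ≤ ℓ - 2 →
      word ℓ (cartanD ℓ) (wordD1 ℓ) (rootOf ℓ (cartanD ℓ) j) = rootOf ℓ (cartanD ℓ) j := by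
  have hf1 : ∀ j, j < ℓ → co ℓ (rootOf ℓ (cartanD ℓ) 1) j
      = (if j = 0 then (2:ℤ) else 0) + (if j = 1 then -1 else 0)
        + (if j = 0 then 0 else 0) + (if j = 0 then 0 else 0) := by
    intro j hj
    rw [co_rootOf _ _ hj]
    unfold cartanD; split_ifs <;> first | contradiction | omega
  have P21 : psum ℓ (rootOf ℓ (cartanD ℓ) 1) (ℓ - 2) = 1 := by
    rw [psum_spikes4 _ _ 0 1 0 0 2 (-1) 0 0 (fun j hj => hf1 j (by omega))]
    split_ifs <;> first | contradiction | omega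
  have PL1 : psum ℓ (rootOf ℓ (cartanD ℓ) 1) ℓ = 1 := by
    rw [psum_spikes4 _ _ 0 1 0 0 2 (-1) 0 0 (fun j hj => hf1 j (by omega))]
    split_ifs <;> first | contradiction | omega
  have hfθ : ∀ j, j < ℓ → co ℓ (-thetaD ℓ) j
      = (if j = 1 then (-1:ℤ) else 0) + (if j = 1 then 0 else 0)
        + (if j = 1 then 0 else 0) + (if j = 1 then 0 else 0) := by
    intro j hj
    rw [co_neg, co_theta hℓ hj]
    split_ifs <;> first | contradiction | omega
  have P2θ : psum ℓ (-thetaD ℓ) (ℓ - 2) = -1 := by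
    rw [psum_spikes4 _ _ 1 1 1 1 (-1) 0 0 0 (fun j hj => hfθ j (by omega))]
    split_ifs <;> first | contradiction | omega
  have PLθ : psum ℓ (-thetaD ℓ) ℓ = -1 := by
    rw [psum_spikes4 _ _ 1 1 1 1 (-1) 0 0 0 (fun j hj => hfθ j (by omega))]
    split_ifs <;> first | contradiction | omega
  have hfa : ∀ j, j < ℓ → co ℓ (rootOf ℓ (cartanD ℓ) (ℓ - 1)) j
      = (if j = ℓ - 3 then (-1:ℤ) else 0) + (if j = ℓ - 2 then 2 else 0)
        + (if j = ℓ - 3 then 0 else 0) + (if j = ℓ - 3 then 0 else 0) := by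
    intro j hj
    rw [co_rootOf _ _ hj]
    unfold cartanD; split_ifs <;> first | contradiction | omega
  have P2a : psum ℓ (rootOf ℓ (cartanD ℓ) (ℓ - 1)) (ℓ - 2) = -1 := by
    rw [psum_spikes4 _ _ (ℓ - 3) (ℓ - 2) (ℓ - 3) (ℓ - 3) (-1) 2 0 0
      (fun j hj => hfa j (by omega))]
    split_ifs <;> first | contradiction | omega
  have PLa : psum ℓ (rootOf ℓ (cartanD ℓ) (ℓ - 1)) ℓ = 1 := by
    rw [psum_spikes4 _ _ (ℓ - 3) (ℓ - 2) (ℓ - 3) (ℓ - 3) (-1) 2 0 0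
      (fun j hj => hfa j (by omega))]
    split_ifs <;> first | contradiction | omega
  have hfb : ∀ j, j < ℓ → co ℓ (rootOf ℓ (cartanD ℓ) ℓ) j
      = (if j = ℓ - 3 then (-1:ℤ) else 0) + (if j = ℓ - 1 then 2 else 0)
        + (if j = ℓ - 3 then 0 else 0) + (if j = ℓ - 3 then 0 else 0) := by
    intro j hj
    rw [co_rootOf _ _ hj]
    unfold cartanD; split_ifs <;> first | contradiction | omega
  have P2b : psum ℓ (rootOf ℓ (cartanD ℓ) ℓ) (ℓ - 2) = -1 := by
    rw [psum_spikes4 _ _ (ℓ - 3) (ℓ - 1) (ℓ - 3) (ℓ - 3) (-1) 2 0 0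
      (fun j hj => hfb j (by omega))]
    split_ifs <;> first | contradiction | omega
  have PLb : psum ℓ (rootOf ℓ (cartanD ℓ) ℓ) ℓ = 1 := by
    rw [psum_spikes4 _ _ (ℓ - 3) (ℓ - 1) (ℓ - 3) (ℓ - 3) (-1) 2 0 0
      (fun j hj => hfb j (by omega))]
    split_ifs <;> first | contradiction | omega
  refine ⟨?_, ?_, ?_, ?_, ?_⟩
  · refine co_ext fun k hk => ?_
    rw [co_word_full hℓ _ hk]
    rcases (by omega : k = 0 ∨ (1 ≤ k ∧ k + 3 ≤ ℓ) ∨ k + 2 = ℓ ∨ k + 1 = ℓ) with rfl | h | h | h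
    · rw [if_pos rfl, P21, PL1, co_rootOf _ _ (by omega), co_neg, co_theta hℓ (by omega)]
      have hC : cartanD ℓ 1 (0 + 1) = 2 := by
        unfold cartanD; split_ifs <;> first | contradiction | omega
      rw [hC]; norm_num
    · rw [if_neg (by omega), if_pos (by omega), co_rootOf _ _ hk, co_neg, co_theta hℓ hk]
      have hC : cartanD ℓ 1 (k + 1) = if k = 1 then -1 else 0 := by
        unfold cartanD; split_ifs <;> first | contradiction | omega
      rw [hC]; split_ifs <;> first | contradiction | omega
    · rw [if_neg (by omega), if_neg (by omega), if_pos (by omega),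
        co_rootOf _ _ (by omega : ℓ - 1 < ℓ), co_neg, co_theta hℓ hk]
      have hC : cartanD ℓ 1 (ℓ - 1 + 1) = 0 := by
        unfold cartanD; split_ifs <;> first | contradiction | omega
      rw [hC]; split_ifs <;> first | contradiction | omega
    · rw [if_neg (by omega), if_neg (by omega), if_neg (by omega),
        co_rootOf _ _ (by omega : ℓ - 2 < ℓ), co_neg, co_theta hℓ hk]
      have hC : cartanD ℓ 1 (ℓ - 2 + 1) = 0 := by
        unfold cartanD; split_ifs <;> first | contradiction | omega
      rw [hC]; split_ifs <;> first | contradiction | omega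
  · refine co_ext fun k hk => ?_
    rw [co_word_full hℓ _ hk, co_rootOf _ _ hk]
    rcases (by omega : k = 0 ∨ (1 ≤ k ∧ k + 3 ≤ ℓ) ∨ k + 2 = ℓ ∨ k + 1 = ℓ) with rfl | h | h | h
    · rw [if_pos rfl, P2θ, PLθ, co_neg, co_theta hℓ (by omega)]
      have hC : cartanD ℓ 1 (0 + 1) = 2 := by
        unfold cartanD; split_ifs <;> first | contradiction | omega
      rw [hC]; norm_num
    · rw [if_neg (by omega), if_pos (by omega), co_neg, co_theta hℓ hk]
      have hC : cartanD ℓ 1 (k + 1) = if k = 1 then -1 else 0 := by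
        unfold cartanD; split_ifs <;> first | contradiction | omega
      rw [hC]; split_ifs <;> first | contradiction | omega
    · rw [if_neg (by omega), if_neg (by omega), if_pos (by omega), co_neg,
        co_theta hℓ (by omega : ℓ - 1 < ℓ)]
      have hC : cartanD ℓ 1 (k + 1) = 0 := by
        unfold cartanD; split_ifs <;> first | contradiction | omega
      rw [hC]; split_ifs <;> first | contradiction | omega
    · rw [if_neg (by omega), if_neg (by omega), if_neg (by omega), co_neg,
        co_theta hℓ (by omega : ℓ - 2 < ℓ)]
      have hC : cartanD ℓ 1 (k + 1) = 0 := by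
        unfold cartanD; split_ifs <;> first | contradiction | omega
      rw [hC]; split_ifs <;> first | contradiction | omega
  · refine co_ext fun k hk => ?_
    rw [co_word_full hℓ _ hk]
    rcases (by omega : k = 0 ∨ (1 ≤ k ∧ k + 3 ≤ ℓ) ∨ k + 2 = ℓ ∨ k + 1 = ℓ) with rfl | h | h | h
    · rw [if_pos rfl, P2a, PLa, co_rootOf (cartanD ℓ) (ℓ - 1) (k := 0) (by omega),
        co_rootOf (cartanD ℓ) ℓ (k := 0) (by omega)]
      have hC : cartanD ℓ (ℓ - 1) (0 + 1) = 0 := by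
        unfold cartanD; split_ifs <;> first | contradiction | omega
      have hC' : cartanD ℓ ℓ (0 + 1) = 0 := by
        unfold cartanD; split_ifs <;> first | contradiction | omega
      rw [hC, hC']; norm_num
    · rw [if_neg (by omega), if_pos (by omega), co_rootOf (cartanD ℓ) (ℓ - 1) hk,
        co_rootOf (cartanD ℓ) ℓ hk]
      have hC : cartanD ℓ (ℓ - 1) (k + 1) = if k = ℓ - 3 then -1 else 0 := by
        unfold cartanD; split_ifs <;> first | contradiction | omega
      have hC' : cartanD ℓ ℓ (k + 1) = if k = ℓ - 3 then -1 else 0 := by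
        unfold cartanD; split_ifs <;> first | contradiction | omega
      rw [hC, hC']
    · rw [if_neg (by omega), if_neg (by omega), if_pos (by omega),
        co_rootOf (cartanD ℓ) (ℓ - 1) (k := ℓ - 1) (by omega), co_rootOf (cartanD ℓ) ℓ hk]
      have hC : cartanD ℓ (ℓ - 1) (ℓ - 1 + 1) = 0 := by
        unfold cartanD; split_ifs <;> first | contradiction | omega
      have hC' : cartanD ℓ ℓ (k + 1) = 0 := by
        unfold cartanD; split_ifs <;> first | contradiction | omega
      rw [hC, hC']
    · rw [if_neg (by omega), if_neg (by omega), if_neg (by omega),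
        co_rootOf (cartanD ℓ) (ℓ - 1) (k := ℓ - 2) (by omega), co_rootOf (cartanD ℓ) ℓ hk]
      have hC : cartanD ℓ (ℓ - 1) (ℓ - 2 + 1) = 2 := by
        unfold cartanD; split_ifs <;> first | contradiction | omega
      have hC' : cartanD ℓ ℓ (k + 1) = 2 := by
        unfold cartanD; split_ifs <;> first | contradiction | omega
      rw [hC, hC']
  · refine co_ext fun k hk => ?_
    rw [co_word_full hℓ _ hk]
    rcases (by omega : k = 0 ∨ (1 ≤ k ∧ k + 3 ≤ ℓ) ∨ k + 2 = ℓ ∨ k + 1 = ℓ) with rfl | h | h | h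
    · rw [if_pos rfl, P2b, PLb, co_rootOf (cartanD ℓ) ℓ (k := 0) (by omega),
        co_rootOf (cartanD ℓ) (ℓ - 1) (k := 0) (by omega)]
      have hC : cartanD ℓ ℓ (0 + 1) = 0 := by
        unfold cartanD; split_ifs <;> first | contradiction | omega
      have hC' : cartanD ℓ (ℓ - 1) (0 + 1) = 0 := by
        unfold cartanD; split_ifs <;> first | contradiction | omega
      rw [hC, hC']; norm_num
    · rw [if_neg (by omega), if_pos (by omega), co_rootOf (cartanD ℓ) ℓ hk,
        co_rootOf (cartanD ℓ) (ℓ - 1) hk]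
      have hC : cartanD ℓ ℓ (k + 1) = if k = ℓ - 3 then -1 else 0 := by
        unfold cartanD; split_ifs <;> first | contradiction | omega
      have hC' : cartanD ℓ (ℓ - 1) (k + 1) = if k = ℓ - 3 then -1 else 0 := by
        unfold cartanD; split_ifs <;> first | contradiction | omega
      rw [hC, hC']
    · rw [if_neg (by omega), if_neg (by omega), if_pos (by omega),
        co_rootOf (cartanD ℓ) ℓ (k := ℓ - 1) (by omega), co_rootOf (cartanD ℓ) (ℓ - 1) hk]
      have hC : cartanD ℓ ℓ (ℓ - 1 + 1) = 2 := by
        unfold cartanD; split_ifs <;> first | contradiction | omega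
      have hC' : cartanD ℓ (ℓ - 1) (k + 1) = 2 := by
        unfold cartanD; split_ifs <;> first | contradiction | omega
      rw [hC, hC']
    · rw [if_neg (by omega), if_neg (by omega), if_neg (by omega),
        co_rootOf (cartanD ℓ) ℓ (k := ℓ - 2) (by omega), co_rootOf (cartanD ℓ) (ℓ - 1) hk]
      have hC : cartanD ℓ ℓ (ℓ - 2 + 1) = 0 := by
        unfold cartanD; split_ifs <;> first | contradiction | omega
      have hC' : cartanD ℓ (ℓ - 1) (k + 1) = 0 := by
        unfold cartanD; split_ifs <;> first | contradiction | omega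
      rw [hC, hC']
  · intro j hj2 hj3
    have hps : psum ℓ (rootOf ℓ (cartanD ℓ) j) (ℓ - 2) + psum ℓ (rootOf ℓ (cartanD ℓ) j) ℓ
        = 0 := by
      rcases (by omega : j ≤ ℓ - 3 ∨ j = ℓ - 2) with hc | hc
      · have hfj : ∀ i, i < ℓ → co ℓ (rootOf ℓ (cartanD ℓ) j) i
            = (if i = j - 2 then (-1:ℤ) else 0) + (if i = j - 1 then 2 else 0)
              + (if i = j then -1 else 0) + (if i = j then 0 else 0) := by
          intro i hi
          rw [co_rootOf _ _ hi]
          unfold cartanD; split_ifs <;> first | contradiction | omega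
        rw [psum_spikes4 _ _ (j - 2) (j - 1) j j (-1) 2 (-1) 0
            (fun i hi => hfj i (by omega)),
          psum_spikes4 _ _ (j - 2) (j - 1) j j (-1) 2 (-1) 0
            (fun i hi => hfj i (by omega))]
        split_ifs <;> first | contradiction | omega
      · subst hc
        have hfj : ∀ i, i < ℓ → co ℓ (rootOf ℓ (cartanD ℓ) (ℓ - 2)) i
            = (if i = ℓ - 4 then (-1:ℤ) else 0) + (if i = ℓ - 3 then 2 else 0)
              + (if i = ℓ - 2 then -1 else 0) + (if i = ℓ - 1 then -1 else 0) := by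
          intro i hi
          rw [co_rootOf _ _ hi]
          unfold cartanD; split_ifs <;> first | contradiction | omega
        rw [psum_spikes4 _ _ (ℓ - 4) (ℓ - 3) (ℓ - 2) (ℓ - 1) (-1) 2 (-1) (-1)
            (fun i hi => hfj i (by omega)),
          psum_spikes4 _ _ (ℓ - 4) (ℓ - 3) (ℓ - 2) (ℓ - 1) (-1) 2 (-1) (-1)
            (fun i hi => hfj i (by omega))]
        split_ifs <;> first | contradiction | omega
    refine co_ext fun k hk => ?_
    rw [co_word_full hℓ _ hk]
    rcases (by omega : k = 0 ∨ (1 ≤ k ∧ k + 3 ≤ ℓ) ∨ k + 2 = ℓ ∨ k + 1 = ℓ) with rfl | h | h | h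
    · rw [if_pos rfl]
      omega
    · rw [if_neg (by omega), if_pos (by omega)]
    · rw [if_neg (by omega), if_neg (by omega), if_pos (by omega),
        co_rootOf _ _ (by omega : ℓ - 1 < ℓ), co_rootOf _ _ hk]
      have hC : cartanD ℓ j (ℓ - 1 + 1) = if j = ℓ - 2 then -1 else 0 := by
        unfold cartanD; split_ifs <;> first | contradiction | omega
      have hC' : cartanD ℓ j (k + 1) = if j = ℓ - 2 then -1 else 0 := by
        unfold cartanD; split_ifs <;> first | contradiction | omega
      rw [hC, hC']
    · rw [if_neg (by omega), if_neg (by omega), if_neg (by omega),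
        co_rootOf _ _ (by omega : ℓ - 2 < ℓ), co_rootOf _ _ hk]
      have hC : cartanD ℓ j (ℓ - 2 + 1) = if j = ℓ - 2 then -1 else 0 := by
        unfold cartanD; split_ifs <;> first | contradiction | omega
      have hC' : cartanD ℓ j (k + 1) = if j = ℓ - 2 then -1 else 0 := by
        unfold cartanD; split_ifs <;> first | contradiction | omega
      rw [hC, hC']
/-- In type `D_ℓ` (`ℓ ≥ 4`), `σ = σ_1 ⋯ σ_ℓ σ_{ℓ-2} ⋯ σ_1` swaps `α_1` with `-θ`,
swaps `α_{ℓ-1}` with `α_ℓ`, and fixes `α_j` for `2 ≤ j ≤ ℓ-2`. -/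
theorem typeD_element1_on_simple_roots (ℓ : ℕ) (hℓ : 4 ≤ ℓ) :
    word ℓ (cartanD ℓ) (wordD1 ℓ) (rootOf ℓ (cartanD ℓ) 1) = -thetaD ℓ ∧
    word ℓ (cartanD ℓ) (wordD1 ℓ) (-thetaD ℓ) = rootOf ℓ (cartanD ℓ) 1 ∧
    word ℓ (cartanD ℓ) (wordD1 ℓ) (rootOf ℓ (cartanD ℓ) (ℓ - 1)) = rootOf ℓ (cartanD ℓ) ℓ ∧
    word ℓ (cartanD ℓ) (wordD1 ℓ) (rootOf ℓ (cartanD ℓ) ℓ) = rootOf ℓ (cartanD ℓ) (ℓ - 1) ∧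
    ∀ j, 2 ≤ j → j ≤ ℓ - 2 →
      word ℓ (cartanD ℓ) (wordD1 ℓ) (rootOf ℓ (cartanD ℓ) j) = rootOf ℓ (cartanD ℓ) j :=
  typeD_element1_on_simple_roots' ℓ hℓ
end

section
/- Let ℓ ≥ 5 be odd. In the root system of type D_ℓ, the Weyl group element σ = (σ_{ℓ−1}σ_{ℓ−2}⋯σ_1)(σ_ℓσ_{ℓ−2}σ_{ℓ−3}⋯σ_2)(σ_{ℓ−1}σ_{ℓ−2}⋯σ_3)⋯(σ_ℓ) satisfies σ(λ_1) = −λ_{ℓ−1} + λ_ℓ, σ(λ_j) = λ_{ℓ−j} − 2λ_{ℓ−1} for 2 ≤ j ≤ ℓ−2, σ(λ_{ℓ−1}) = λ_1 − λ_{ℓ−1}, and σ(λ_ℓ) = −λ_{ℓ−1}. -/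
/-- The word `(σ_{ℓ-1} σ_{ℓ-2} ⋯ σ_1)(σ_ℓ σ_{ℓ-2} σ_{ℓ-3} ⋯ σ_2)(σ_{ℓ-1} σ_{ℓ-2} ⋯ σ_3) ⋯ (σ_ℓ)`:
the `m`-th factor (`0 ≤ m ≤ ℓ-2`) starts with `σ_{ℓ-1}` if `m` is even and `σ_ℓ` if `m` is odd,
followed by `σ_{ℓ-2} σ_{ℓ-3} ⋯ σ_{m+1}`. -/
def wordDlm1 (ℓ : ℕ) : List ℕ :=
  (List.range (ℓ - 1)).flatMap (fun m =>
    (if m % 2 = 0 then ℓ - 1 else ℓ) :: ((List.range (ℓ - 2 - m)).map (fun t => ℓ - 2 - t)))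

def toN (ℓ : ℕ) (c : Fin ℓ → ℤ) : ℕ → ℤ := fun j =>
  if h : 1 ≤ j ∧ j ≤ ℓ then c ⟨j - 1, by omega⟩ else 0

def Eps (ℓ : ℕ) (c : ℕ → ℤ) : ℕ → ℤ := fun k =>
  if 1 ≤ k ∧ k ≤ ℓ - 2 then 2 * (∑ j ∈ Finset.Icc k (ℓ - 2), c j) + c (ℓ - 1) + c ℓ
  else if k = ℓ - 1 then c (ℓ - 1) + c ℓ
  else if k = ℓ then c ℓ - c (ℓ - 1)
  else 0

def sE (ℓ i : ℕ) (x : ℕ → ℤ) : ℕ → ℤ := fun k =>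
  if 1 ≤ i ∧ i ≤ ℓ - 1 then (if k = i then x (i + 1) else if k = i + 1 then x i else x k)
  else if i = ℓ then (if k = ℓ - 1 then -x ℓ else if k = ℓ then -x (ℓ - 1) else x k)
  else x k

lemma Eps_rec (ℓ : ℕ) (hℓ : 5 ≤ ℓ) (c : ℕ → ℤ) (k : ℕ) (h1 : 1 ≤ k) (h2 : k ≤ ℓ - 2) :
    Eps ℓ c k = Eps ℓ c (k + 1) + 2 * c k := by
  have hs : ∑ j ∈ Finset.Icc k (ℓ - 2), c j
      = c k + ∑ j ∈ Finset.Icc (k + 1) (ℓ - 2), c j := by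
    rw [show Finset.Icc k (ℓ - 2) = insert k (Finset.Icc (k + 1) (ℓ - 2)) by
        ext a; simp only [Finset.mem_insert, Finset.mem_Icc]; omega,
      Finset.sum_insert (by simp only [Finset.mem_Icc]; omega)]
  rcases Nat.lt_or_ge k (ℓ - 2) with h | h
  · simp only [Eps]
    rw [if_pos ⟨h1, h2⟩, if_pos ⟨by omega, by omega⟩, hs]; ring
  · have hk : k = ℓ - 2 := by omega
    subst hk
    simp only [Eps]
    rw [if_pos ⟨h1, le_refl _⟩, if_neg (by omega), if_pos (by omega), hs,
      show Finset.Icc (ℓ - 2 + 1) (ℓ - 2) = ∅ by rw [Finset.Icc_eq_empty]; omega]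
    simp only [Finset.sum_empty]; ring

lemma Eps_lm1 (ℓ : ℕ) (hℓ : 5 ≤ ℓ) (c : ℕ → ℤ) : Eps ℓ c (ℓ - 1) = c (ℓ - 1) + c ℓ := by
  simp only [Eps]; rw [if_neg (by omega)]; simp

lemma Eps_l (ℓ : ℕ) (hℓ : 5 ≤ ℓ) (c : ℕ → ℤ) : Eps ℓ c ℓ = c ℓ - c (ℓ - 1) := by
  simp only [Eps]; rw [if_neg (by omega), if_neg (by omega)]; simp

lemma Eps_out (ℓ : ℕ) (hℓ : 5 ≤ ℓ) (c : ℕ → ℤ) (k : ℕ) (h : k = 0 ∨ ℓ < k) :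
    Eps ℓ c k = 0 := by
  simp only [Eps]; rw [if_neg (by omega), if_neg (by omega), if_neg (by omega)]

lemma toN_sref (ℓ : ℕ) (hℓ : 5 ≤ ℓ) (C : ℕ → ℕ → ℤ) (i : ℕ) (hi : 1 ≤ i ∧ i ≤ ℓ)
    (c : Fin ℓ → ℤ) (j : ℕ) (hj : 1 ≤ j ∧ j ≤ ℓ) :
    toN ℓ (sref ℓ C i c) j = toN ℓ c j - toN ℓ c i * C i j := by
  simp only [toN, sref, dif_pos hj, dif_pos hi, Pi.sub_apply, Pi.smul_apply, rootOf,
    smul_eq_mul]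
  rw [show j - 1 + 1 = j from by omega]

set_option maxHeartbeats 2000000 in
lemma comm_sref (ℓ : ℕ) (hℓ : 5 ≤ ℓ) (i : ℕ) (hi1 : 1 ≤ i) (hi2 : i ≤ ℓ) (c : Fin ℓ → ℤ) :
    Eps ℓ (toN ℓ (sref ℓ (cartanD ℓ) i c)) = sE ℓ i (Eps ℓ (toN ℓ c)) := by
  set c' : ℕ → ℤ := toN ℓ c with hc'
  set c'' : ℕ → ℤ := toN ℓ (sref ℓ (cartanD ℓ) i c) with hc''
  have hs : ∀ j, 1 ≤ j → j ≤ ℓ → c'' j = c' j - c' i * cartanD ℓ i j := fun j h1 h2 =>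
    toN_sref ℓ hℓ _ i ⟨hi1, hi2⟩ c j ⟨h1, h2⟩
  set x : ℕ → ℤ := Eps ℓ c' with hx
  have hxrec : ∀ j, 1 ≤ j → j ≤ ℓ - 2 → x j = x (j + 1) + 2 * c' j :=
    fun j a b => Eps_rec ℓ hℓ c' j a b
  have hx1 : x (ℓ - 1) = c' (ℓ - 1) + c' ℓ := Eps_lm1 ℓ hℓ c'
  have hx2 : x ℓ = c' ℓ - c' (ℓ - 1) := Eps_l ℓ hℓ c'
  have b1 : x (ℓ - 1 + 1) = x ℓ := by rw [show ℓ - 1 + 1 = ℓ from by omega]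
  have b2 : x (ℓ - 2 + 1) = x (ℓ - 1) := by rw [show ℓ - 2 + 1 = ℓ - 1 from by omega]
  have b3 : x (ℓ - 2 + 1 + 1) = x ℓ := by rw [show ℓ - 2 + 1 + 1 = ℓ from by omega]
  have bc : c' (ℓ - 2 + 1) = c' (ℓ - 1) := by rw [show ℓ - 2 + 1 = ℓ - 1 from by omega]
  have base : ∀ k, ℓ - 1 ≤ k → Eps ℓ c'' k = sE ℓ i x k := by
    intro k hk
    rcases (show k = ℓ - 1 ∨ k = ℓ ∨ ℓ < k by omega) with hk2 | hk2 | hk'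
    · rw [hk2, Eps_lm1 ℓ hℓ c'', hs (ℓ - 1) (by omega) (by omega), hs ℓ (by omega) (by omega)]
      by_cases h1 : i = ℓ
      · rw [h1]
        have e1 : cartanD ℓ ℓ (ℓ - 1) = 0 := by unfold cartanD; split_ifs <;> omega
        have e2 : cartanD ℓ ℓ ℓ = 2 := by unfold cartanD; split_ifs <;> omega
        rw [e1, e2]; unfold sE; split_ifs <;> first | omega | exact False.elim ‹False›
      · by_cases h2 : i = ℓ - 1
        · rw [h2]
          have e1 : cartanD ℓ (ℓ - 1) (ℓ - 1) = 2 := by unfold cartanD; split_ifs <;> omega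
          have e2 : cartanD ℓ (ℓ - 1) ℓ = 0 := by unfold cartanD; split_ifs <;> omega
          rw [e1, e2]; unfold sE; split_ifs <;> first | omega | exact False.elim ‹False›
        · by_cases h3 : i = ℓ - 2
          · rw [h3]
            have e1 : cartanD ℓ (ℓ - 2) (ℓ - 1) = -1 := by unfold cartanD; split_ifs <;> omega
            have e2 : cartanD ℓ (ℓ - 2) ℓ = -1 := by unfold cartanD; split_ifs <;> omega
            have r1 := hxrec (ℓ - 2) (by omega) (by omega)
            rw [e1, e2]; unfold sE; split_ifs <;> first | omega | exact False.elim ‹False›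
          · have e1 : cartanD ℓ i (ℓ - 1) = 0 := by unfold cartanD; split_ifs <;> omega
            have e2 : cartanD ℓ i ℓ = 0 := by unfold cartanD; split_ifs <;> omega
            rw [e1, e2]; unfold sE; split_ifs <;> first | omega | exact False.elim ‹False›
    · rw [hk2, Eps_l ℓ hℓ c'', hs ℓ (by omega) (by omega), hs (ℓ - 1) (by omega) (by omega)]
      by_cases h1 : i = ℓ
      · rw [h1]
        have e1 : cartanD ℓ ℓ (ℓ - 1) = 0 := by unfold cartanD; split_ifs <;> omega
        have e2 : cartanD ℓ ℓ ℓ = 2 := by unfold cartanD; split_ifs <;> omega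
        rw [e1, e2]; unfold sE; split_ifs <;> first | omega | exact False.elim ‹False›
      · by_cases h2 : i = ℓ - 1
        · rw [h2]
          have e1 : cartanD ℓ (ℓ - 1) (ℓ - 1) = 2 := by unfold cartanD; split_ifs <;> omega
          have e2 : cartanD ℓ (ℓ - 1) ℓ = 0 := by unfold cartanD; split_ifs <;> omega
          rw [e1, e2]; unfold sE; split_ifs <;> first | omega | exact False.elim ‹False›
        · by_cases h3 : i = ℓ - 2
          · rw [h3]
            have e1 : cartanD ℓ (ℓ - 2) (ℓ - 1) = -1 := by unfold cartanD; split_ifs <;> omega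
            have e2 : cartanD ℓ (ℓ - 2) ℓ = -1 := by unfold cartanD; split_ifs <;> omega
            rw [e1, e2]; unfold sE; split_ifs <;> first | omega | exact False.elim ‹False›
          · have e1 : cartanD ℓ i (ℓ - 1) = 0 := by unfold cartanD; split_ifs <;> omega
            have e2 : cartanD ℓ i ℓ = 0 := by unfold cartanD; split_ifs <;> omega
            rw [e1, e2]; unfold sE; split_ifs <;> first | omega | exact False.elim ‹False›
    · rw [Eps_out ℓ hℓ c'' k (Or.inr hk')]
      have hxk : x k = 0 := Eps_out ℓ hℓ c' k (Or.inr hk')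
      unfold sE; split_ifs <;> first | omega | exact False.elim ‹False›
  have zero : Eps ℓ c'' 0 = sE ℓ i x 0 := by
    rw [Eps_out ℓ hℓ c'' 0 (Or.inl rfl)]
    have hx0 : x 0 = 0 := Eps_out ℓ hℓ c' 0 (Or.inl rfl)
    unfold sE; split_ifs <;> first | omega | exact False.elim ‹False›
  have step : ∀ k, 1 ≤ k → k ≤ ℓ - 2 →
      Eps ℓ c'' (k + 1) = sE ℓ i x (k + 1) → Eps ℓ c'' k = sE ℓ i x k := by
    intro k h1 h2 ih
    rw [Eps_rec ℓ hℓ c'' k h1 h2, ih, hs k (by omega) (by omega)]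
    by_cases hA : i = k
    · rw [hA]
      have hC : cartanD ℓ k k = 2 := by unfold cartanD; split_ifs <;> omega
      have r1 := hxrec k h1 h2
      rw [hC]; unfold sE; split_ifs <;> first | omega | exact False.elim ‹False›
    · by_cases hB : i = k + 1
      · rw [hB]
        have hC : cartanD ℓ (k + 1) k = -1 := by unfold cartanD; split_ifs <;> omega
        rw [hC]
        rcases (show k + 1 ≤ ℓ - 2 ∨ k = ℓ - 2 by omega) with hk3 | hk3
        · have r1 := hxrec k h1 h2
          have r2 := hxrec (k + 1) (by omega) hk3
          unfold sE; split_ifs <;> first | omega | exact False.elim ‹False›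
        · rw [hk3]
          have r1 := hxrec (ℓ - 2) (by omega) (by omega)
          unfold sE; split_ifs <;> first | omega | exact False.elim ‹False›
      · by_cases hCc : i + 1 = k
        · rw [← hCc]
          have hC : cartanD ℓ i (i + 1) = -1 := by unfold cartanD; split_ifs <;> omega
          rw [hC]
          have r1 := hxrec i (by omega) (by omega)
          have r2 := hxrec (i + 1) (by omega) (by omega)
          unfold sE; split_ifs <;> first | omega | exact False.elim ‹False›
        · by_cases hD : i = ℓ ∧ k = ℓ - 2
          · rw [hD.1, hD.2]
            have hC : cartanD ℓ ℓ (ℓ - 2) = -1 := by unfold cartanD; split_ifs <;> omega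
            rw [hC]
            have r1 := hxrec (ℓ - 2) (by omega) (by omega)
            unfold sE; split_ifs <;> first | omega | exact False.elim ‹False›
          · have hC : cartanD ℓ i k = 0 := by unfold cartanD; split_ifs <;> omega
            rw [hC]
            have r1 := hxrec k h1 h2
            unfold sE; split_ifs <;> first | omega | exact False.elim ‹False›
  funext k
  suffices H : ∀ d k, ℓ ≤ k + d → Eps ℓ c'' k = sE ℓ i x k from H ℓ k (by omega)
  intro d
  induction d with
  | zero => intro k hk; exact base k (by omega)
  | succ d ih =>
    intro k hk
    rcases (show ℓ - 1 ≤ k ∨ k = 0 ∨ (1 ≤ k ∧ k ≤ ℓ - 2) by omega) with h | h | h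
    · exact base k h
    · rw [h]; exact zero
    · exact step k h.1 h.2 (ih (k + 1) (by omega))

def Sh (ℓ n : ℕ) (x : ℕ → ℤ) : ℕ → ℤ := fun k =>
  if ℓ - 1 - n ≤ k ∧ k ≤ ℓ - 2 then x (k + 1)
  else if k = ℓ - 1 then x (ℓ - 1 - n)
  else x k

def Pm (ℓ m : ℕ) (x : ℕ → ℤ) : ℕ → ℤ := fun k =>
  if 1 ≤ k ∧ k ≤ ℓ then
    (if k ≤ m then x k
     else if k = ℓ ∧ m % 2 = 0 then x (m + 1)
     else -x (ℓ + m + 1 - k))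
  else x k

lemma word_comm (ℓ : ℕ) (hℓ : 5 ≤ ℓ) (l : List ℕ) (c : Fin ℓ → ℤ)
    (hl : ∀ i ∈ l, 1 ≤ i ∧ i ≤ ℓ) :
    Eps ℓ (toN ℓ (word ℓ (cartanD ℓ) l c)) = l.foldr (sE ℓ) (Eps ℓ (toN ℓ c)) := by
  induction l with
  | nil => rfl
  | cons a t ih =>
    have ha := hl a (by simp)
    rw [show word ℓ (cartanD ℓ) (a :: t) c
        = sref ℓ (cartanD ℓ) a (word ℓ (cartanD ℓ) t c) from rfl,
      List.foldr_cons, comm_sref ℓ hℓ a ha.1 ha.2 (word ℓ (cartanD ℓ) t c),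
      ih (fun i hi => hl i (by simp [hi]))]

lemma run_eq (ℓ : ℕ) (hℓ : 5 ≤ ℓ) : ∀ n, n ≤ ℓ - 2 → ∀ x : ℕ → ℤ,
    ((List.range n).map (fun t => ℓ - 2 - t)).foldr (sE ℓ) x = Sh ℓ n x := by
  intro n
  induction n with
  | zero =>
    intro _ x
    funext k
    simp only [List.range_zero, List.map_nil, List.foldr_nil]
    unfold Sh
    split_ifs <;> first | rfl | omega | (congr 1 <;> omega)
  | succ n ih =>
    intro hn x
    rw [List.range_succ, List.map_append, List.foldr_append]
    simp only [List.map_cons, List.map_nil, List.foldr_cons, List.foldr_nil]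
    rw [ih (by omega) (sE ℓ (ℓ - 2 - n) x)]
    funext k
    unfold Sh sE
    split_ifs <;>
      first
        | rfl | omega | (congr 1 <;> omega) | (congr 1 <;> congr 1 <;> omega)
        | (exact False.elim ‹False›)

def Qf (ℓ m : ℕ) (x : ℕ → ℤ) : ℕ → ℤ := fun k =>
  if 1 ≤ k ∧ k ≤ ℓ then
    (if k ≤ m then x k
     else if k = ℓ - 1 then x (m + 1)
     else if k = ℓ then (if (m + 1) % 2 = 0 then x (m + 2) else -x (m + 2))
     else -x (ℓ + m + 1 - k))
  else x k

set_option maxHeartbeats 2000000 in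
lemma QfEq (ℓ : ℕ) (hℓ : 5 ≤ ℓ) (m : ℕ) (hm : m ≤ ℓ - 2) (x : ℕ → ℤ) :
    Sh ℓ (ℓ - 2 - m) (Pm ℓ (m + 1) x) = Qf ℓ m x := by
  funext k
  unfold Sh Pm Qf
  split_ifs <;>
    first
      | rfl | omega | (congr 1 <;> omega) | (congr 1 <;> congr 1 <;> omega)
      | (exact False.elim ‹False›)

set_option maxHeartbeats 2000000 in
lemma PmStep (ℓ : ℕ) (hℓ : 5 ≤ ℓ) (m : ℕ) (hm : m ≤ ℓ - 2) (x : ℕ → ℤ) :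
    sE ℓ (if m % 2 = 0 then ℓ - 1 else ℓ) (Qf ℓ m x) = Pm ℓ m x := by
  funext k
  by_cases hm2 : m % 2 = 0
  · rw [if_pos hm2]
    unfold sE Qf Pm
    split_ifs <;>
      first
        | rfl | omega | (congr 1 <;> omega) | (congr 1 <;> congr 1 <;> omega)
        | (exact False.elim ‹False›)
  · rw [if_neg hm2]
    unfold sE Qf Pm
    split_ifs <;>
      first
        | rfl | omega | (congr 1 <;> omega) | (congr 1 <;> congr 1 <;> omega)
        | (exact False.elim ‹False›)

set_option maxHeartbeats 2000000 in
lemma tail_eq (ℓ : ℕ) (hℓ : 5 ≤ ℓ) (hodd : ℓ % 2 = 1) : ∀ d, d ≤ ℓ - 1 → ∀ x : ℕ → ℤ,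
    ((List.range' (ℓ - 1 - d) d).flatMap (fun m =>
        (if m % 2 = 0 then ℓ - 1 else ℓ)
          :: ((List.range (ℓ - 2 - m)).map (fun t => ℓ - 2 - t)))).foldr (sE ℓ) x
      = Pm ℓ (ℓ - 1 - d) x := by
  intro d
  induction d with
  | zero =>
    intro _ x
    funext k
    simp only [List.range'_zero, List.flatMap_nil, List.foldr_nil, Nat.sub_zero]
    unfold Pm
    split_ifs <;> first | rfl | omega | (congr 1 <;> omega)
  | succ d ih =>
    intro hd x
    rw [show ℓ - 1 - (d + 1) = ℓ - 2 - d from by omega, List.range'_succ,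
      show ℓ - 2 - d + 1 = ℓ - 1 - d from by omega, List.flatMap_cons, List.foldr_append,
      ih (by omega) x, List.foldr_cons, run_eq ℓ hℓ (ℓ - 2 - (ℓ - 2 - d)) (by omega),
      show ℓ - 1 - d = ℓ - 2 - d + 1 from by omega,
      QfEq ℓ hℓ (ℓ - 2 - d) (by omega) x, PmStep ℓ hℓ (ℓ - 2 - d) (by omega) x]

lemma toN_lam (ℓ : ℕ) (j : ℕ) (hj1 : 1 ≤ j) (hj2 : j ≤ ℓ) (k : ℕ) :
    toN ℓ (lam ℓ j) k = if k = j then 1 else 0 := by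
  unfold toN
  by_cases hk : 1 ≤ k ∧ k ≤ ℓ
  · rw [dif_pos hk]
    unfold lam
    rw [dif_pos ⟨hj1, hj2⟩, Pi.single_apply]
    simp only [Fin.mk.injEq]
    split_ifs <;> first | rfl | omega
  · rw [dif_neg hk]
    split_ifs <;> first | rfl | omega

lemma Ejval (ℓ : ℕ) (hℓ : 5 ≤ ℓ) (j : ℕ) (hj1 : 1 ≤ j) (hj2 : j ≤ ℓ - 2) (k : ℕ) :
    Eps ℓ (toN ℓ (lam ℓ j)) k = if 1 ≤ k ∧ k ≤ j then 2 else 0 := by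
  unfold Eps
  simp only [toN_lam ℓ j hj1 (by omega)]
  rw [Finset.sum_ite_eq' (Finset.Icc k (ℓ - 2)) j (fun _ => (1 : ℤ))]
  simp only [Finset.mem_Icc]
  split_ifs <;> omega

lemma Elm1val (ℓ : ℕ) (hℓ : 5 ≤ ℓ) (k : ℕ) :
    Eps ℓ (toN ℓ (lam ℓ (ℓ - 1))) k =
      if 1 ≤ k ∧ k ≤ ℓ - 1 then 1 else if k = ℓ then -1 else 0 := by
  unfold Eps
  simp only [toN_lam ℓ (ℓ - 1) (by omega) (by omega)]
  rw [Finset.sum_ite_eq' (Finset.Icc k (ℓ - 2)) (ℓ - 1) (fun _ => (1 : ℤ))]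
  simp only [Finset.mem_Icc]
  split_ifs <;> omega

lemma Elval (ℓ : ℕ) (hℓ : 5 ≤ ℓ) (k : ℕ) :
    Eps ℓ (toN ℓ (lam ℓ ℓ)) k = if 1 ≤ k ∧ k ≤ ℓ then 1 else 0 := by
  unfold Eps
  simp only [toN_lam ℓ ℓ (by omega) (by omega)]
  rw [Finset.sum_ite_eq' (Finset.Icc k (ℓ - 2)) ℓ (fun _ => (1 : ℤ))]
  simp only [Finset.mem_Icc]
  split_ifs <;> omega

lemma toN_add (ℓ : ℕ) (a b : Fin ℓ → ℤ) (k : ℕ) :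
    toN ℓ (a + b) k = toN ℓ a k + toN ℓ b k := by
  unfold toN; split_ifs <;> simp

lemma toN_neg (ℓ : ℕ) (a : Fin ℓ → ℤ) (k : ℕ) : toN ℓ (-a) k = -toN ℓ a k := by
  unfold toN; split_ifs <;> simp

lemma toN_sub (ℓ : ℕ) (a b : Fin ℓ → ℤ) (k : ℕ) :
    toN ℓ (a - b) k = toN ℓ a k - toN ℓ b k := by
  unfold toN; split_ifs <;> simp

lemma EtN_add (ℓ : ℕ) (a b : Fin ℓ → ℤ) (k : ℕ) :
    Eps ℓ (toN ℓ (a + b)) k = Eps ℓ (toN ℓ a) k + Eps ℓ (toN ℓ b) k := by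
  unfold Eps
  simp only [toN_add ℓ a b]
  rw [Finset.sum_add_distrib]
  split_ifs <;> ring

lemma EtN_neg (ℓ : ℕ) (a : Fin ℓ → ℤ) (k : ℕ) :
    Eps ℓ (toN ℓ (-a)) k = -Eps ℓ (toN ℓ a) k := by
  unfold Eps
  simp only [toN_neg ℓ a]
  rw [Finset.sum_neg_distrib]
  split_ifs <;> ring

lemma EtN_sub (ℓ : ℕ) (a b : Fin ℓ → ℤ) (k : ℕ) :
    Eps ℓ (toN ℓ (a - b)) k = Eps ℓ (toN ℓ a) k - Eps ℓ (toN ℓ b) k := by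
  unfold Eps
  simp only [toN_sub ℓ a b]
  rw [Finset.sum_sub_distrib]
  split_ifs <;> ring

lemma EtN_inj (ℓ : ℕ) (hℓ : 5 ≤ ℓ) (a b : Fin ℓ → ℤ)
    (h : Eps ℓ (toN ℓ a) = Eps ℓ (toN ℓ b)) : a = b := by
  have hv : ∀ j, 1 ≤ j → j ≤ ℓ → toN ℓ a j = toN ℓ b j := by
    intro j h1 h2
    rcases (show (1 ≤ j ∧ j ≤ ℓ - 2) ∨ j = ℓ - 1 ∨ j = ℓ by omega) with hj | hj | hj
    · have e1 := congrFun h j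
      have e2 := congrFun h (j + 1)
      have r1 := Eps_rec ℓ hℓ (toN ℓ a) j hj.1 hj.2
      have r2 := Eps_rec ℓ hℓ (toN ℓ b) j hj.1 hj.2
      omega
    · subst hj
      have e1 := congrFun h (ℓ - 1)
      have e2 := congrFun h ℓ
      rw [Eps_lm1 ℓ hℓ, Eps_lm1 ℓ hℓ] at e1
      rw [Eps_l ℓ hℓ, Eps_l ℓ hℓ] at e2
      omega
    · rw [hj]
      have e1 := congrFun h (ℓ - 1)
      have e2 := congrFun h ℓ
      rw [Eps_lm1 ℓ hℓ, Eps_lm1 ℓ hℓ] at e1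
      rw [Eps_l ℓ hℓ, Eps_l ℓ hℓ] at e2
      omega
  funext i
  have hi := i.isLt
  have hval := hv (i.1 + 1) (by omega) (by omega)
  unfold toN at hval
  split_ifs at hval with hc
  · simpa using hval
  · exact absurd ⟨by omega, by omega⟩ hc

lemma Pm0_val (ℓ : ℕ) (hℓ : 5 ≤ ℓ) (y : ℕ → ℤ) (k : ℕ) :
    Pm ℓ 0 y k =
      if 1 ≤ k ∧ k ≤ ℓ - 1 then -y (ℓ + 1 - k) else if k = ℓ then y 1 else y k := by
  unfold Pm
  split_ifs <;>
    first
      | rfl | omega | (congr 1 <;> omega) | (congr 1 <;> congr 1 <;> omega)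
      | (exact False.elim ‹False›)

set_option maxHeartbeats 1000000 in
/-- In type `D_ℓ` with `ℓ ≥ 5` odd, the element
`σ = (σ_{ℓ-1} ⋯ σ_1)(σ_ℓ σ_{ℓ-2} ⋯ σ_2)(σ_{ℓ-1} σ_{ℓ-2} ⋯ σ_3) ⋯ (σ_ℓ)` satisfies
`σ(λ_1) = -λ_{ℓ-1} + λ_ℓ`, `σ(λ_j) = λ_{ℓ-j} - 2λ_{ℓ-1}` for `2 ≤ j ≤ ℓ-2`,
`σ(λ_{ℓ-1}) = λ_1 - λ_{ℓ-1}`, and `σ(λ_ℓ) = -λ_{ℓ-1}`. -/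
theorem typeD_odd_element_on_fundamental_weights (ℓ : ℕ) (hℓ : 5 ≤ ℓ) (hodd : Odd ℓ) :
    word ℓ (cartanD ℓ) (wordDlm1 ℓ) (lam ℓ 1) = -lam ℓ (ℓ - 1) + lam ℓ ℓ ∧
    (∀ j, 2 ≤ j → j ≤ ℓ - 2 →
      word ℓ (cartanD ℓ) (wordDlm1 ℓ) (lam ℓ j) = lam ℓ (ℓ - j) - 2 • lam ℓ (ℓ - 1)) ∧
    word ℓ (cartanD ℓ) (wordDlm1 ℓ) (lam ℓ (ℓ - 1)) = lam ℓ 1 - lam ℓ (ℓ - 1) ∧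
    word ℓ (cartanD ℓ) (wordDlm1 ℓ) (lam ℓ ℓ) = -lam ℓ (ℓ - 1) := by
  have hmem : ∀ i ∈ wordDlm1 ℓ, 1 ≤ i ∧ i ≤ ℓ := by
    intro i hi
    unfold wordDlm1 at hi
    simp only [List.mem_flatMap, List.mem_range, List.mem_cons, List.mem_map] at hi
    obtain ⟨m, hm, hi⟩ := hi
    rcases hi with rfl | ⟨t, ht, rfl⟩
    · split_ifs <;> omega
    · omega
  have hword : ∀ c : Fin ℓ → ℤ,
      Eps ℓ (toN ℓ (word ℓ (cartanD ℓ) (wordDlm1 ℓ) c)) = Pm ℓ 0 (Eps ℓ (toN ℓ c)) := by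
    intro c
    rw [word_comm ℓ hℓ _ c hmem]
    have ht := tail_eq ℓ hℓ (Nat.odd_iff.mp hodd) (ℓ - 1) (le_refl _) (Eps ℓ (toN ℓ c))
    rw [show ℓ - 1 - (ℓ - 1) = 0 from by omega] at ht
    rw [← ht]
    congr 1
    unfold wordDlm1
    rw [List.range_eq_range']
  refine ⟨?_, ?_, ?_, ?_⟩
  · apply EtN_inj ℓ hℓ
    rw [hword]
    funext k
    rw [Pm0_val ℓ hℓ, EtN_add ℓ, EtN_neg ℓ]
    simp only [Ejval ℓ hℓ 1 (by omega) (by omega), Elm1val ℓ hℓ, Elval ℓ hℓ]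
    split_ifs <;> omega
  · intro j hj1 hj2
    apply EtN_inj ℓ hℓ
    rw [hword]
    funext k
    rw [Pm0_val ℓ hℓ, show (2 : ℕ) • lam ℓ (ℓ - 1) = lam ℓ (ℓ - 1) + lam ℓ (ℓ - 1) from
      two_nsmul _, EtN_sub ℓ, EtN_add ℓ]
    simp only [Ejval ℓ hℓ j (by omega) (by omega), Ejval ℓ hℓ (ℓ - j) (by omega) (by omega),
      Elm1val ℓ hℓ]
    split_ifs <;> omega
  · apply EtN_inj ℓ hℓ
    rw [hword]
    funext k
    rw [Pm0_val ℓ hℓ, EtN_sub ℓ]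
    simp only [Ejval ℓ hℓ 1 (by omega) (by omega), Elm1val ℓ hℓ]
    split_ifs <;> omega
  · apply EtN_inj ℓ hℓ
    rw [hword]
    funext k
    rw [Pm0_val ℓ hℓ, EtN_neg ℓ]
    simp only [Elm1val ℓ hℓ, Elval ℓ hℓ]
    split_ifs <;> omega
end

section
/- Let ℓ ≥ 4 be even. In the root system of type D_ℓ, the Weyl group element σ = (σ_ℓσ_{ℓ−2}σ_{ℓ−3}⋯σ_1)(σ_{ℓ−1}σ_{ℓ−2}⋯σ_2)(σ_ℓσ_{ℓ−2}⋯σ_3)⋯(σ_ℓ) satisfies σ(α_j) = α_{ℓ−j} for all 0 ≤ j ≤ ℓ, where α_0 = −θ and θ is the highest root. -/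
set_option maxHeartbeats 1600000

/-- The word `(σ_ℓ σ_{ℓ-2} σ_{ℓ-3} ⋯ σ_1)(σ_{ℓ-1} σ_{ℓ-2} ⋯ σ_2)(σ_ℓ σ_{ℓ-2} ⋯ σ_3) ⋯ (σ_ℓ)`:
the `m`-th factor (`0 ≤ m ≤ ℓ-2`) starts with `σ_ℓ` if `m` is even and `σ_{ℓ-1}` if `m` is odd,
followed by `σ_{ℓ-2} σ_{ℓ-3} ⋯ σ_{m+1}`. -/
def wordDl (ℓ : ℕ) : List ℕ :=
  (List.range (ℓ - 1)).flatMap (fun m =>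
    (if m % 2 = 0 then ℓ else ℓ - 1) :: ((List.range (ℓ - 2 - m)).map (fun t => ℓ - 2 - t)))

/-- `α_j` for `0 ≤ j ≤ ℓ` in type `D_ℓ`, with the convention `α_0 = -θ`. -/
def alphaIdxD (ℓ : ℕ) (j : ℕ) : Fin ℓ → ℤ :=
  if j = 0 then -thetaD ℓ else rootOf ℓ (cartanD ℓ) j

/-! ### ε-coordinate model -/

/-- extension of a weight vector to `ℕ`. -/
def extD (ℓ : ℕ) (μ : Fin ℓ → ℤ) : ℕ → ℤ := fun i => if h : i < ℓ then μ ⟨i, h⟩ else 0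

/-- doubled ε-coordinates of a weight written in the fundamental weight basis. -/
def EpsD (ℓ : ℕ) (μ : Fin ℓ → ℤ) : ℕ → ℤ := fun k =>
  if k < ℓ then
    2 * (∑ t ∈ Finset.Ico k (ℓ - 2), extD ℓ μ t)
      + (if k = ℓ - 1 then -extD ℓ μ (ℓ - 2) else extD ℓ μ (ℓ - 2)) + extD ℓ μ (ℓ - 1)
  else 0

/-- signed-permutation action of `σ_i` on doubled ε-coordinates. -/
def sED (ℓ i : ℕ) (w : ℕ → ℤ) : ℕ → ℤ := fun k =>
  if 1 ≤ i ∧ i ≤ ℓ - 1 then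
    (if k = i - 1 then w i else if k = i then w (i - 1) else w k)
  else if i = ℓ then
    (if k = ℓ - 2 then -w (ℓ - 1) else if k = ℓ - 1 then -w (ℓ - 2) else w k)
  else w k

def factorD (ℓ m : ℕ) : List ℕ :=
  (if m % 2 = 0 then ℓ else ℓ - 1) :: ((List.range (ℓ - 2 - m)).map (fun t => ℓ - 2 - t))

lemma foldr_str (ℓ : ℕ) (hℓ : 4 ≤ ℓ) (j : ℕ) (hj : j ≤ ℓ - 2) (w : ℕ → ℤ) :
    List.foldr (sED ℓ) w ((List.range j).map (fun t => ℓ - 2 - t)) = fun k =>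
      if k < ℓ - 2 - j then w k
      else if k + 2 ≤ ℓ - 1 then w (k + 1)
      else if k = ℓ - 2 then w (ℓ - 2 - j)
      else w k := by
  induction j generalizing w with
  | zero =>
    funext k
    simp only [List.range_zero, List.map_nil, List.foldr_nil]
    split_ifs <;> first | rfl | omega | (congr 1 <;> omega)
  | succ j ih =>
    rw [List.range_succ, List.map_append, List.foldr_append]
    simp only [List.map_cons, List.map_nil, List.foldr_cons, List.foldr_nil]
    rw [ih (by omega)]
    funext k
    simp only [sED]
    split_ifs <;> first | rfl | omega | (congr 1 <;> omega)

def FFD (ℓ m : ℕ) (w : ℕ → ℤ) : ℕ → ℤ := fun k =>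
  if ℓ ≤ k then w k
  else if k < m then w k
  else if k + 2 ≤ ℓ - 1 then w (k + 1)
  else if k = ℓ - 2 then (if m % 2 = 0 then -w (ℓ - 1) else w (ℓ - 1))
  else (if m % 2 = 0 then -w m else w m)

lemma foldr_factor (ℓ : ℕ) (hℓ : 4 ≤ ℓ) (m : ℕ) (hm : m ≤ ℓ - 2) (w : ℕ → ℤ) :
    List.foldr (sED ℓ) w (factorD ℓ m) = FFD ℓ m w := by
  unfold factorD
  rw [List.foldr_cons, foldr_str ℓ hℓ (ℓ - 2 - m) (by omega) w,
    show ℓ - 2 - (ℓ - 2 - m) = m from by omega]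
  funext k
  by_cases hm2 : m % 2 = 0 <;>
    simp only [sED, FFD, hm2, if_pos, if_neg, if_true, if_false, reduceIte] <;>
    split_ifs <;> first | rfl | omega | (congr 1 <;> omega)

def PFD (ℓ n : ℕ) (w : ℕ → ℤ) : ℕ → ℤ := fun k =>
  if ℓ ≤ k then w k
  else if k + n + 1 ≤ ℓ then (if n % 2 = 1 ∧ k + n = ℓ - 1 then -w (ℓ - 1) else w (k + n))
  else -w (ℓ - 1 - k)

lemma foldr_flat (ℓ : ℕ) (hℓ : 4 ≤ ℓ) (n : ℕ) (hn : n ≤ ℓ - 1) (w : ℕ → ℤ) :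
    List.foldr (sED ℓ) w ((List.range n).flatMap (factorD ℓ)) = PFD ℓ n w := by
  induction n generalizing w with
  | zero =>
    funext k
    simp only [List.range_zero, List.flatMap_nil, List.foldr_nil, PFD]
    simp only [show ((0:ℕ) % 2 = 1) = False from by simp, false_and, if_false]
    split_ifs <;> first | rfl | omega | (congr 1 <;> omega)
  | succ n ih =>
    rw [List.range_succ, List.flatMap_append, List.foldr_append, List.flatMap_singleton,
      foldr_factor ℓ hℓ n (by omega) w, ih (by omega)]
    funext k
    by_cases hn2 : n % 2 = 0 <;>
      simp only [PFD, FFD, hn2, Nat.succ_mod_two_eq_one_iff, Nat.succ_mod_two_eq_zero_iff,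
        if_true, if_false, reduceIte, false_and, true_and, and_false, and_true] <;>
      (try simp only [show ((0:ℕ) = 1) = False from by simp, false_and, if_false]) <;>
      split_ifs <;>
      first | rfl | omega | (congr 1 <;> omega) | (congr 2 <;> omega) |
        (rw [neg_neg]; congr 1 <;> omega)

/-! ### linearity of `EpsD` -/

lemma extD_sub_smul (ℓ : ℕ) (μ ρ : Fin ℓ → ℤ) (c : ℤ) (t : ℕ) :
    extD ℓ (μ - c • ρ) t = extD ℓ μ t - c * extD ℓ ρ t := by
  unfold extD
  split <;> simp

lemma extD_add (ℓ : ℕ) (μ ν : Fin ℓ → ℤ) (t : ℕ) :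
    extD ℓ (μ + ν) t = extD ℓ μ t + extD ℓ ν t := by
  unfold extD
  split <;> simp

lemma extD_neg (ℓ : ℕ) (μ : Fin ℓ → ℤ) (t : ℕ) :
    extD ℓ (-μ) t = -extD ℓ μ t := by
  unfold extD
  split <;> simp

lemma EpsD_sub_smul (ℓ : ℕ) (μ ρ : Fin ℓ → ℤ) (c : ℤ) (k : ℕ) :
    EpsD ℓ (μ - c • ρ) k = EpsD ℓ μ k - c * EpsD ℓ ρ k := by
  unfold EpsD
  split
  · simp only [extD_sub_smul, Finset.sum_sub_distrib, ← Finset.mul_sum]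
    split_ifs <;> ring
  · ring

lemma EpsD_add (ℓ : ℕ) (μ ν : Fin ℓ → ℤ) (k : ℕ) :
    EpsD ℓ (μ + ν) k = EpsD ℓ μ k + EpsD ℓ ν k := by
  unfold EpsD
  split
  · simp only [extD_add, Finset.sum_add_distrib]
    split_ifs <;> ring
  · ring

lemma EpsD_neg (ℓ : ℕ) (μ : Fin ℓ → ℤ) (k : ℕ) :
    EpsD ℓ (-μ) k = -EpsD ℓ μ k := by
  unfold EpsD
  split
  · simp only [extD_neg, Finset.sum_neg_distrib]
    split_ifs <;> ring
  · ring

lemma EpsD_zero (ℓ : ℕ) (k : ℕ) : EpsD ℓ (0 : Fin ℓ → ℤ) k = 0 := by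
  unfold EpsD extD
  simp

lemma EpsD_sum (ℓ : ℕ) {ι : Type*} (s : Finset ι) (f : ι → (Fin ℓ → ℤ)) (k : ℕ) :
    EpsD ℓ (∑ i ∈ s, f i) k = ∑ i ∈ s, EpsD ℓ (f i) k := by
  classical
  induction s using Finset.cons_induction with
  | empty => simp [EpsD_zero]
  | cons a s ha ih => rw [Finset.sum_cons, EpsD_add, ih, Finset.sum_cons]

/-! ### `EpsD` of the simple roots -/

lemma sum_ind (a b x : ℕ) (v : ℤ) :
    (∑ t ∈ Finset.Ico a b, if t = x then v else 0) = if a ≤ x ∧ x < b then v else 0 := by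
  rw [Finset.sum_ite_eq']
  simp [Finset.mem_Ico]

lemma sum_ind2 (a b i : ℕ) (v : ℤ) :
    (∑ t ∈ Finset.Ico a b, if t + 2 = i then v else 0)
      = if a + 2 ≤ i ∧ i < b + 2 then v else 0 := by
  rcases Nat.lt_or_ge i 2 with h | h
  · rw [Finset.sum_eq_zero, if_neg (by omega)]
    intro t _
    rw [if_neg (by omega)]
  · have e : ∀ t ∈ Finset.Ico a b, (if t + 2 = i then v else 0) = if t = i - 2 then v else 0 := by
      intro t _
      split_ifs <;> first | rfl | omega
    rw [Finset.sum_congr rfl e, Finset.sum_ite_eq']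
    simp only [Finset.mem_Ico]
    split_ifs <;> first | rfl | omega

lemma EpsD_root (ℓ : ℕ) (hℓ : 4 ≤ ℓ) (i : ℕ) (h1 : 1 ≤ i) (h2 : i ≤ ℓ - 1) :
    EpsD ℓ (rootOf ℓ (cartanD ℓ) i)
      = fun k => if k = i - 1 then 2 else if k = i then -2 else 0 := by
  funext k
  have step : ∀ t ∈ Finset.Ico k (ℓ - 2),
      extD ℓ (rootOf ℓ (cartanD ℓ) i) t
        = (if t = i - 1 then (2:ℤ) else 0)
          + ((if t + 2 = i then -1 else 0) + (if t = i then -1 else 0)) := by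
    intro t ht
    rw [Finset.mem_Ico] at ht
    simp only [extD, dif_pos (show t < ℓ by omega), rootOf]
    unfold cartanD
    split_ifs <;> omega
  have hsum : (∑ t ∈ Finset.Ico k (ℓ - 2), extD ℓ (rootOf ℓ (cartanD ℓ) i) t)
      = (if k ≤ i - 1 ∧ i - 1 < ℓ - 2 then 2 else 0)
        + ((if k + 2 ≤ i ∧ i < (ℓ - 2) + 2 then -1 else 0)
          + (if k ≤ i ∧ i < ℓ - 2 then -1 else 0)) := by
    rw [Finset.sum_congr rfl step, Finset.sum_add_distrib, Finset.sum_add_distrib,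
      sum_ind, sum_ind2, sum_ind]
  have ht1 : extD ℓ (rootOf ℓ (cartanD ℓ) i) (ℓ - 2)
      = (if i = ℓ - 2 then -1 else if i = ℓ - 1 then 2 else 0) := by
    simp only [extD, dif_pos (show ℓ - 2 < ℓ by omega), rootOf]
    unfold cartanD
    split_ifs <;> omega
  have ht2 : extD ℓ (rootOf ℓ (cartanD ℓ) i) (ℓ - 1)
      = (if i = ℓ - 2 then -1 else 0) := by
    simp only [extD, dif_pos (show ℓ - 1 < ℓ by omega), rootOf]
    unfold cartanD
    split_ifs <;> omega
  simp only [EpsD]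
  rw [hsum, ht1, ht2]
  split_ifs <;> omega

lemma EpsD_root_last (ℓ : ℕ) (hℓ : 4 ≤ ℓ) :
    EpsD ℓ (rootOf ℓ (cartanD ℓ) ℓ)
      = fun k => if k = ℓ - 2 then 2 else if k = ℓ - 1 then 2 else 0 := by
  funext k
  have step : ∀ t ∈ Finset.Ico k (ℓ - 2),
      extD ℓ (rootOf ℓ (cartanD ℓ) ℓ) t = (if t = ℓ - 3 then (-1:ℤ) else 0) := by
    intro t ht
    rw [Finset.mem_Ico] at ht
    simp only [extD, dif_pos (show t < ℓ by omega), rootOf]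
    unfold cartanD
    split_ifs <;> omega
  have hsum : (∑ t ∈ Finset.Ico k (ℓ - 2), extD ℓ (rootOf ℓ (cartanD ℓ) ℓ) t)
      = if k ≤ ℓ - 3 ∧ ℓ - 3 < ℓ - 2 then -1 else 0 := by
    rw [Finset.sum_congr rfl step, sum_ind]
  have ht1 : extD ℓ (rootOf ℓ (cartanD ℓ) ℓ) (ℓ - 2) = 0 := by
    simp only [extD, dif_pos (show ℓ - 2 < ℓ by omega), rootOf]
    unfold cartanD
    split_ifs <;> omega
  have ht2 : extD ℓ (rootOf ℓ (cartanD ℓ) ℓ) (ℓ - 1) = 2 := by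
    simp only [extD, dif_pos (show ℓ - 1 < ℓ by omega), rootOf]
    unfold cartanD
    split_ifs <;> omega
  simp only [EpsD]
  rw [hsum, ht1, ht2]
  split_ifs <;> omega

/-! ### intertwining -/

lemma dcoord1 (ℓ : ℕ) (hℓ : 4 ≤ ℓ) (μ : Fin ℓ → ℤ) (i : ℕ) (h1 : 1 ≤ i) (h2 : i ≤ ℓ - 1) :
    EpsD ℓ μ (i - 1) - EpsD ℓ μ i = 2 * extD ℓ μ (i - 1) := by
  simp only [EpsD, if_pos (show i - 1 < ℓ by omega), if_pos (show i < ℓ by omega)]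
  rcases Nat.lt_or_ge i (ℓ - 1) with hc | hc
  · rw [Finset.sum_eq_sum_Ico_succ_bot (show i - 1 < ℓ - 2 by omega),
      show i - 1 + 1 = i from by omega]
    split_ifs <;> omega
  · have hi : i = ℓ - 1 := by omega
    rw [hi, show ℓ - 1 - 1 = ℓ - 2 from by omega,
      show Finset.Ico (ℓ - 2) (ℓ - 2) = ∅ from Finset.Ico_eq_empty (by omega),
      show Finset.Ico (ℓ - 1) (ℓ - 2) = ∅ from Finset.Ico_eq_empty (by omega),
      Finset.sum_empty]
    split_ifs <;> omega

lemma dcoord2 (ℓ : ℕ) (hℓ : 4 ≤ ℓ) (μ : Fin ℓ → ℤ) :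
    EpsD ℓ μ (ℓ - 2) + EpsD ℓ μ (ℓ - 1) = 2 * extD ℓ μ (ℓ - 1) := by
  simp only [EpsD, if_pos (show ℓ - 2 < ℓ by omega), if_pos (show ℓ - 1 < ℓ by omega)]
  rw [show Finset.Ico (ℓ - 2) (ℓ - 2) = ∅ from Finset.Ico_eq_empty (by omega),
    show Finset.Ico (ℓ - 1) (ℓ - 2) = ∅ from Finset.Ico_eq_empty (by omega),
    Finset.sum_empty]
  split_ifs <;> omega

lemma intertwine (ℓ : ℕ) (hℓ : 4 ≤ ℓ) (i : ℕ) (h1 : 1 ≤ i) (h2 : i ≤ ℓ) (μ : Fin ℓ → ℤ) :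
    EpsD ℓ (sref ℓ (cartanD ℓ) i μ) = sED ℓ i (EpsD ℓ μ) := by
  funext k
  have hsr : sref ℓ (cartanD ℓ) i μ
      = μ - μ ⟨i - 1, by omega⟩ • rootOf ℓ (cartanD ℓ) i := by
    unfold sref
    rw [dif_pos ⟨h1, h2⟩]
  rw [hsr, EpsD_sub_smul]
  have hcc : μ ⟨i - 1, by omega⟩ = extD ℓ μ (i - 1) := by
    simp [extD, dif_pos (show i - 1 < ℓ by omega)]
  rw [hcc]
  rcases Nat.lt_or_ge i ℓ with hil | hil
  · rw [EpsD_root ℓ hℓ i h1 (by omega)]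
    have hd := dcoord1 ℓ hℓ μ i h1 (by omega)
    simp only [sED, if_pos (show 1 ≤ i ∧ i ≤ ℓ - 1 from ⟨h1, by omega⟩)]
    split_ifs <;> first | omega | (subst_vars; omega)
  · have hi : i = ℓ := by omega
    rw [hi, EpsD_root_last ℓ hℓ]
    have hd := dcoord2 ℓ hℓ μ
    simp only [sED, if_neg (show ¬(1 ≤ ℓ ∧ ℓ ≤ ℓ - 1) from by omega), if_pos rfl]
    split_ifs <;> first | omega | (subst_vars; omega)

lemma word_eps (ℓ : ℕ) (hℓ : 4 ≤ ℓ) (l : List ℕ) (hl : ∀ x ∈ l, 1 ≤ x ∧ x ≤ ℓ)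
    (μ : Fin ℓ → ℤ) :
    EpsD ℓ (word ℓ (cartanD ℓ) l μ) = List.foldr (sED ℓ) (EpsD ℓ μ) l := by
  induction l with
  | nil => rfl
  | cons x l ih =>
    have hx := hl x (by simp)
    rw [show word ℓ (cartanD ℓ) (x :: l) μ
        = sref ℓ (cartanD ℓ) x (word ℓ (cartanD ℓ) l μ) from rfl,
      intertwine ℓ hℓ x hx.1 hx.2, ih (fun y hy => hl y (by simp [hy])), List.foldr_cons]

/-! ### injectivity -/

lemma EpsD_inj (ℓ : ℕ) (hℓ : 4 ≤ ℓ) {μ ν : Fin ℓ → ℤ} (h : EpsD ℓ μ = EpsD ℓ ν) : μ = ν := by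
  have hk : ∀ k, EpsD ℓ μ k = EpsD ℓ ν k := fun k => congrFun h k
  have ha := hk (ℓ - 2)
  have hb := hk (ℓ - 1)
  simp only [EpsD, if_pos (show ℓ - 2 < ℓ by omega), if_pos (show ℓ - 1 < ℓ by omega),
    show Finset.Ico (ℓ - 2) (ℓ - 2) = ∅ from Finset.Ico_eq_empty (by omega),
    show Finset.Ico (ℓ - 1) (ℓ - 2) = ∅ from Finset.Ico_eq_empty (by omega),
    Finset.sum_empty] at ha hb
  rw [if_neg (show ¬(ℓ - 2 = ℓ - 1) by omega)] at ha
  simp only [if_true] at hb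
  have h2a : extD ℓ μ (ℓ - 2) = extD ℓ ν (ℓ - 2) := by omega
  have h2b : extD ℓ μ (ℓ - 1) = extD ℓ ν (ℓ - 1) := by omega
  have hsum : ∀ k, (∑ t ∈ Finset.Ico k (ℓ - 2), extD ℓ μ t)
      = ∑ t ∈ Finset.Ico k (ℓ - 2), extD ℓ ν t := by
    intro k
    rcases Nat.lt_or_ge k (ℓ - 2) with hc | hc
    · have hthis := hk k
      simp only [EpsD, if_pos (show k < ℓ by omega)] at hthis
      rw [if_neg (show ¬(k = ℓ - 1) by omega)] at hthis
      omega
    · rw [Finset.Ico_eq_empty (by omega)]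
      simp
  have hext : ∀ x, x < ℓ - 2 → extD ℓ μ x = extD ℓ ν x := by
    intro x hx
    have e1 := hsum x
    have e2 := hsum (x + 1)
    rw [Finset.sum_eq_sum_Ico_succ_bot hx, Finset.sum_eq_sum_Ico_succ_bot hx] at e1
    omega
  funext x
  have hxv : (x : ℕ) < ℓ := x.2
  have hfin : extD ℓ μ x.1 = extD ℓ ν x.1 := by
    rcases Nat.lt_or_ge x.1 (ℓ - 2) with hc | hc
    · exact hext x.1 hc
    · have : x.1 = ℓ - 2 ∨ x.1 = ℓ - 1 := by omega
      rcases this with hcc | hcc <;> rw [hcc]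
      · exact h2a
      · exact h2b
  simpa [extD, dif_pos hxv] using hfin

/-! ### `EpsD` of θ and of `α_j` -/

lemma EpsD_theta (ℓ : ℕ) (hℓ : 4 ≤ ℓ) :
    EpsD ℓ (thetaD ℓ) = fun k => if k = 0 then 2 else if k = 1 then 2 else 0 := by
  funext k
  rw [thetaD, EpsD_add, EpsD_add, EpsD_add, EpsD_sum]
  have hs : ∀ i ∈ Finset.Icc 2 (ℓ - 2), EpsD ℓ (2 • rootOf ℓ (cartanD ℓ) i) k
      = (if i = k + 1 then (4:ℤ) else 0) + (if i = k then -4 else 0) := by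
    intro i hi
    rw [Finset.mem_Icc] at hi
    rw [two_smul, EpsD_add, EpsD_root ℓ hℓ i (by omega) (by omega)]
    simp only
    split_ifs <;> omega
  rw [Finset.sum_congr rfl hs, Finset.sum_add_distrib, Finset.sum_ite_eq', Finset.sum_ite_eq',
    EpsD_root ℓ hℓ 1 (by omega) (by omega), EpsD_root ℓ hℓ (ℓ - 1) (by omega) (by omega),
    EpsD_root_last ℓ hℓ]
  simp only [Finset.mem_Icc]
  split_ifs <;> omega

/-! ### main theorem -/

/-- In type `D_ℓ` with `ℓ ≥ 4` even, the element
`σ = (σ_ℓ σ_{ℓ-2} ⋯ σ_1)(σ_{ℓ-1} σ_{ℓ-2} ⋯ σ_2)(σ_ℓ σ_{ℓ-2} ⋯ σ_3) ⋯ (σ_ℓ)` satisfies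
`σ(α_j) = α_{ℓ-j}` for all `0 ≤ j ≤ ℓ`, where `α_0 = -θ`. -/
theorem typeD_even_element_on_simple_roots (ℓ : ℕ) (hℓ : 4 ≤ ℓ) (heven : Even ℓ)
    (j : ℕ) (hj : j ≤ ℓ) :
    word ℓ (cartanD ℓ) (wordDl ℓ) (alphaIdxD ℓ j) = alphaIdxD ℓ (ℓ - j) := by
  obtain ⟨c, hc⟩ := heven
  have hval : ∀ x ∈ wordDl ℓ, 1 ≤ x ∧ x ≤ ℓ := by
    intro x hx
    simp only [wordDl, List.mem_flatMap, List.mem_range, List.mem_cons, List.mem_map] at hx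
    obtain ⟨m, hm, hx⟩ := hx
    rcases hx with hcase | ⟨t, ht, hcase⟩
    · split_ifs at hcase <;> omega
    · omega
  apply EpsD_inj ℓ hℓ
  rw [word_eps ℓ hℓ _ hval (alphaIdxD ℓ j),
    show wordDl ℓ = (List.range (ℓ - 1)).flatMap (factorD ℓ) from rfl,
    foldr_flat ℓ hℓ (ℓ - 1) le_rfl]
  funext k
  simp only [PFD]
  by_cases hj0 : j = 0
  · subst hj0
    rw [show alphaIdxD ℓ 0 = -thetaD ℓ from if_pos rfl, Nat.sub_zero,
      show alphaIdxD ℓ ℓ = rootOf ℓ (cartanD ℓ) ℓ from if_neg (by omega),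
      EpsD_root_last ℓ hℓ]
    simp only [EpsD_neg, EpsD_theta ℓ hℓ]
    split_ifs <;> omega
  · by_cases hjl : j = ℓ
    · rw [hjl]
      rw [show alphaIdxD ℓ ℓ = rootOf ℓ (cartanD ℓ) ℓ from if_neg (by omega), Nat.sub_self,
        show alphaIdxD ℓ 0 = -thetaD ℓ from if_pos rfl,
        EpsD_root_last ℓ hℓ]
      simp only [EpsD_neg, EpsD_theta ℓ hℓ]
      split_ifs <;> omega
    · rw [show alphaIdxD ℓ j = rootOf ℓ (cartanD ℓ) j from if_neg hj0,
        show alphaIdxD ℓ (ℓ - j) = rootOf ℓ (cartanD ℓ) (ℓ - j) from if_neg (by omega),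
        EpsD_root ℓ hℓ j (by omega) (by omega),
        EpsD_root ℓ hℓ (ℓ - j) (by omega) (by omega)]
      simp only
      split_ifs <;> omega
end
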